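/- arXiv:1512.02279 — 3 statements merged into one kernel-verified Lean document; each statement's English description precedes it below -/
import Mathlib

section
/- Let p'(n,r) denote the number of projections in D_r(M_n) that have no unnested singleton block. Then p'(0,0) = 1, p'(n,r) = 0 if r < 0 or r > n, and for all n ≥ 1 and 0 ≤ r ≤ n, p'(n,r) = p'(n−1,r−1) + Σ_{j=r+1}^{n−1} p'(n−1,j), where terms with out-of-range indices are 0. -/
/-!
Partial Brauer diagrams on `n` points are formalized as set partitions
(equivalence relations, i.e. `Setoid`s) of the vertex set
`{1,…,n} ∪ {1',…,n'}`, encoded as `Fin n ⊕ Fin n`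
(`Sum.inl i` is the upper vertex `i`, `Sum.inr i` is the lower vertex `i'`),
all of whose blocks have size at most 2.  The product of two diagrams is
defined via connectivity (paths) in the product graph, and the involution `*`
by interchanging the two rows of vertices.
-/

noncomputable section

open scoped Classical

/-- Vertices of a diagram on `n` points. -/
abbrev PBV (n : ℕ) := Fin n ⊕ Fin n

/-- A "diagram candidate": an arbitrary set partition of the vertices. -/
abbrev Dgm (n : ℕ) := Setoid (PBV n)

/-- The equivalence relation ("joined by a path") generated by a relation. -/
inductive RGen {V : Type*} (r : V → V → Prop) : V → V → Prop
  | rel {x y : V} : r x y → RGen r x y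
  | refl (x : V) : RGen r x x
  | symm {x y : V} : RGen r x y → RGen r y x
  | trans {x y z : V} : RGen r x y → RGen r y z → RGen r x z

namespace Dgm

variable {n : ℕ}

/-- Vertices of the product graph: top, middle and bottom rows. -/
abbrev V3 (n : ℕ) := Fin n ⊕ (Fin n ⊕ Fin n)

/-- The first factor occupies the top and middle rows of the product graph. -/
def topMid : PBV n → V3 n
  | Sum.inl i => Sum.inl i
  | Sum.inr i => Sum.inr (Sum.inl i)

/-- The second factor occupies the middle and bottom rows of the product graph. -/
def midBot : PBV n → V3 n
  | Sum.inl i => Sum.inr (Sum.inl i)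
  | Sum.inr i => Sum.inr (Sum.inr i)

/-- The product diagram occupies the top and bottom rows of the product graph. -/
def topBot : PBV n → V3 n
  | Sum.inl i => Sum.inl i
  | Sum.inr i => Sum.inr (Sum.inr i)

/-- The edges of the product graph `Γ(α, β)`. -/
def prodEdges (α β : Dgm n) (x y : V3 n) : Prop :=
  (∃ a b : PBV n, α.r a b ∧ x = topMid a ∧ y = topMid b) ∨
  (∃ a b : PBV n, β.r a b ∧ x = midBot a ∧ y = midBot b)

/-- The product of two diagrams: two vertices lie in the same block of `α β`
iff they are joined by a path in the product graph `Γ(α, β)`. -/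
def pmul (α β : Dgm n) : Dgm n where
  r x y := RGen (prodEdges α β) (topBot x) (topBot y)
  iseqv := ⟨fun _ => RGen.refl _, fun h => h.symm, fun h₁ h₂ => h₁.trans h₂⟩

/-- Interchanging the upper and the lower vertices. -/
def swapUD : PBV n → PBV n
  | Sum.inl i => Sum.inr i
  | Sum.inr i => Sum.inl i

/-- The involution `α ↦ α*` (reflection in a horizontal axis). -/
def pstar (α : Dgm n) : Dgm n := Setoid.comap swapUD α

/-- All blocks of `α` have size at most 2. -/
def IsPB (α : Dgm n) : Prop :=
  ∀ x y z : PBV n, α.r x y → α.r x z → x = y ∨ x = z ∨ y = z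

/-- The partial Brauer monoid `PB_n` (as a set of diagrams). -/
def PBset (n : ℕ) : Set (Dgm n) := {α | IsPB α}

/-- The position of a vertex in the linear order `1 < 2 < ⋯ < n < n' < ⋯ < 1'`. -/
def vpos : PBV n → ℕ
  | Sum.inl i => (i : ℕ)
  | Sum.inr i => 2 * n - 1 - (i : ℕ)

/-- Planarity: no two blocks cross in the order `1 < ⋯ < n < n' < ⋯ < 1'`. -/
def IsPlanar (α : Dgm n) : Prop :=
  ∀ a b c d : PBV n, α.r a b → α.r c d →
    vpos a < vpos c → vpos c < vpos b → vpos b < vpos d → False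

/-- The Motzkin monoid `M_n` (as a set of diagrams). -/
def Mset (n : ℕ) : Set (Dgm n) := {α | IsPB α ∧ IsPlanar α}

/-- The domain of `α`: upper points lying in a transversal block. -/
def domSet (α : Dgm n) : Set (Fin n) := {i | ∃ j, α.r (Sum.inl i) (Sum.inr j)}

/-- The codomain of `α`: lower points lying in a transversal block. -/
def codomSet (α : Dgm n) : Set (Fin n) := {i | ∃ j, α.r (Sum.inr i) (Sum.inl j)}

/-- The rank of a diagram: the number of its transversal blocks (for a diagram
with blocks of size at most 2, each transversal block contains exactly one
upper point, so this is the size of the domain). -/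
def prank (α : Dgm n) : ℕ := (domSet α).ncard

/-- `α` is an idempotent. -/
def IsIdpt (α : Dgm n) : Prop := pmul α α = α

/-- `α` is a projection. -/
def IsProj (α : Dgm n) : Prop := pmul α α = α ∧ pstar α = α

/-- The D-class `D_r(PB_n)`. -/
def DPB (n r : ℕ) : Set (Dgm n) := {α | α ∈ PBset n ∧ prank α = r}

/-- The ideal `I_r(PB_n)`. -/
def IPB (n r : ℕ) : Set (Dgm n) := {α | α ∈ PBset n ∧ prank α ≤ r}

/-- The D-class `D_r(M_n)`. -/
def DM (n r : ℕ) : Set (Dgm n) := {α | α ∈ Mset n ∧ prank α = r}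

/-- The ideal `I_r(M_n)`. -/
def IM (n r : ℕ) : Set (Dgm n) := {α | α ∈ Mset n ∧ prank α ≤ r}

end Dgm

/-- Membership in the closure of a subset under a binary operation. -/
inductive MClo {γ : Type*} (m : γ → γ → γ) (X : Set γ) : γ → Prop
  | base {x : γ} : x ∈ X → MClo m X x
  | mul {x y : γ} : MClo m X x → MClo m X y → MClo m X (m x y)

/-- The subsemigroup `⟨X⟩` generated by the subset `X`. -/
def genSet {γ : Type*} (m : γ → γ → γ) (X : Set γ) : Set γ := {x | MClo m X x}

/-- The rank of `T`: the least size of a generating set. -/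
noncomputable def rnk {γ : Type*} (m : γ → γ → γ) (T : Set γ) : ℕ :=
  sInf {k | ∃ X : Finset γ, X.card = k ∧ genSet m ↑X = T}

/-- The idempotent rank of `T`: the least size of a generating set consisting
of idempotents. -/
noncomputable def idrnk {γ : Type*} (m : γ → γ → γ) (T : Set γ) : ℕ :=
  sInf {k | ∃ X : Finset γ, X.card = k ∧ (∀ x ∈ X, m x x = x) ∧ genSet m ↑X = T}

/-- `T` is idempotent-generated. -/
def IdptGen {γ : Type*} (m : γ → γ → γ) (T : Set γ) : Prop :=
  genSet m {x ∈ T | m x x = x} = T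

open Dgm
/-- `a(m)`: `a(0) = a(1) = 1` and `a(m) = a(m-1) + (m-1)·a(m-2)`. -/
def aSeq : ℕ → ℕ
  | 0 => 1
  | 1 => 1
  | (m + 2) => aSeq (m + 1) + (m + 1) * aSeq m

/-- The double factorial `k!!`, with the convention `k!! = 0` for even `k ≥ 0`. -/
def oddDF : ℕ → ℕ
  | 0 => 0
  | 1 => 1
  | (k + 2) => (k + 2) * oddDF k

namespace Dgm

variable {n : ℕ}

/-- `{x}` is a singleton upper block of `α`. -/
def UpperSingleton (α : Dgm n) (x : Fin n) : Prop :=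
  ∀ y : PBV n, α.r (Sum.inl x) y → y = Sum.inl x

/-- `{x'}` is a singleton lower block of `α`. -/
def LowerSingleton (α : Dgm n) (x : Fin n) : Prop :=
  ∀ y : PBV n, α.r (Sum.inr x) y → y = Sum.inr x

/-- The upper point `x` is nested: some upper block `{u,v}` has `u < x < v`. -/
def UpperNested (α : Dgm n) (x : Fin n) : Prop :=
  ∃ u v : Fin n, α.r (Sum.inl u) (Sum.inl v) ∧ u < x ∧ x < v

/-- The lower point `x'` is nested: some lower block `{u',v'}` has `u < x < v`. -/
def LowerNested (α : Dgm n) (x : Fin n) : Prop :=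
  ∃ u v : Fin n, α.r (Sum.inr u) (Sum.inr v) ∧ u < x ∧ x < v

/-- `α` has no unnested singleton (upper or lower) block. -/
def NoUnnestedSingleton (α : Dgm n) : Prop :=
  (∀ x, UpperSingleton α x → UpperNested α x) ∧
  (∀ x, LowerSingleton α x → LowerNested α x)

/-- A chain of `d` nested upper hooks of `α` around the upper point `x`:
`u_{d-1} < ⋯ < u_0 < x < v_0 < ⋯ < v_{d-1}` with each `{u_i, v_i}` a block.
The singleton upper block `{x}` has nesting depth at most `k` iff there is no
such chain of length `k + 1`. -/
def UpperHookChain (α : Dgm n) (x : Fin n) (d : ℕ) : Prop :=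
  ∃ u v : Fin d → Fin n,
    (∀ i, α.r (Sum.inl (u i)) (Sum.inl (v i))) ∧
    (∀ i, u i < x ∧ x < v i) ∧ StrictAnti u ∧ StrictMono v

/-- A chain of `d` nested lower hooks of `α` around the lower point `x'`. -/
def LowerHookChain (α : Dgm n) (x : Fin n) (d : ℕ) : Prop :=
  ∃ u v : Fin d → Fin n,
    (∀ i, α.r (Sum.inr (u i)) (Sum.inr (v i))) ∧
    (∀ i, u i < x ∧ x < v i) ∧ StrictAnti u ∧ StrictMono v

/-- `λ_A`: the planar diagram joining the `k`-th smallest element of `A`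
(upper) to `k` (lower), all other blocks being singletons. -/
def lamd (A : Finset (Fin n)) : Dgm n :=
  Setoid.ker (fun x : PBV n =>
    match x with
    | Sum.inl a =>
        if ha : a ∈ A then
          (Sum.inr (((A.orderIsoOfFin rfl).symm ⟨a, ha⟩ : Fin A.card) : ℕ) : ℕ ⊕ ℕ)
        else Sum.inl (a : ℕ)
    | Sum.inr j => Sum.inr (j : ℕ))

/-- `ρ_A = (λ_A)*`. -/
def rhod (A : Finset (Fin n)) : Dgm n := pstar (lamd A)

/-- The diagram whose 2-element blocks are exactly `{i, (π i)'}` for `i < r`. -/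
def permDgm (n r : ℕ) (π : Equiv.Perm (Fin r)) : Dgm n :=
  Setoid.ker (fun x : PBV n =>
    match x with
    | Sum.inl a =>
        if h : (a : ℕ) < r then (Sum.inr ((π ⟨(a : ℕ), h⟩ : Fin r) : ℕ) : ℕ ⊕ ℕ)
        else Sum.inl (a : ℕ)
    | Sum.inr j => Sum.inr (j : ℕ))

/-- The set `S_{[r]} ⊆ PB_n`. -/
def SBr (n r : ℕ) : Set (Dgm n) := {γ | ∃ π : Equiv.Perm (Fin r), γ = permDgm n r π}

/-- The domain of `α` as a `Finset`. -/
def domFinset (α : Dgm n) : Finset (Fin n) :=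
  Finset.univ.filter fun i => i ∈ domSet α

/-- The codomain of `α` as a `Finset`. -/
def codomFinset (α : Dgm n) : Finset (Fin n) :=
  Finset.univ.filter fun i => i ∈ codomSet α

/-- `A ⊆ {1,…,n}` is cosparse: its complement contains no two consecutive
elements. -/
def CosparseS (A : Set (Fin n)) : Prop :=
  ∀ i j : Fin n, i ∉ A → j ∉ A → (j : ℕ) ≠ (i : ℕ) + 1

/-- `id_A`: the diagram with blocks `{a, a'}` for `a ∈ A`, all other blocks
being singletons. -/
def idd (A : Set (Fin n)) : Dgm n :=
  Setoid.ker (fun x : PBV n =>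
    match x with
    | Sum.inl a => if a ∈ A then (Sum.inr (a : ℕ) : ℕ ⊕ ℕ) else Sum.inl (a : ℕ)
    | Sum.inr j => Sum.inr (j : ℕ))

end Dgm

/-- `p'(n,r)`: the number of projections in `D_r(M_n)` with no unnested
singleton block. -/
noncomputable def pM' (n r : ℕ) : ℕ :=
  Set.ncard {α : Dgm n | α ∈ Dgm.DM n r ∧ Dgm.IsProj α ∧ Dgm.NoUnnestedSingleton α}


/-!
A projection `α` of `M_n` satisfies `α* = α`, and its transversals are vertical blocks
`{i, i'}`; so it is determined by its upper half, which records at every point `i` a hook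
`{i, j}`, a vertical, or a singleton. Planarity and the absence of unnested singletons say
exactly that hooks do not cross, no vertical lies under a hook, and every singleton lies under
one. Such patterns on `m + 1` points are classified by their last point. If it is a vertical,
deleting it leaves a pattern of rank `r - 1`. If it closes a hook `{u, m + 1}`, deleting it and
turning `u`, and every singleton nested only by that hook, into verticals leaves a pattern of
some rank `j > r` in which `u` is the vertical with exactly `r` verticals to its left; this
pair determines the original pattern, and each pattern of rank `j > r` has exactly one such
vertical.
-/

open Finset

theorem Finset.card_filter_card_filter_lt_eq {α : Type*} [LinearOrder α] (s : Finset α) (r : ℕ) :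
    #{x ∈ s | #{y ∈ s | y < x} = r} = if r < #s then 1 else 0 := by
  set f : α → ℕ := fun x => #{y ∈ s | y < x}
  have hmono : StrictMonoOn f s := by
    intro x hx x' _ hxx'
    refine card_lt_card ⟨fun y hy => ?_, fun h => ?_⟩
    · simp only [mem_filter] at hy ⊢
      exact ⟨hy.1, hy.2.trans hxx'⟩
    · simpa using h (mem_filter.2 ⟨hx, hxx'⟩)
  have hlt : ∀ x ∈ s, f x < #s := fun x hx =>
    card_lt_card ⟨filter_subset _ s, fun h => by simpa using h hx⟩
  have himage : s.image f = range #s :=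
    eq_of_subset_of_card_le (fun k hk => by
      obtain ⟨x, hx, rfl⟩ := mem_image.1 hk
      exact mem_range.2 (hlt x hx))
      (by rw [card_range, card_image_of_injOn hmono.injOn])
  change #{x ∈ s | f x = r} = _
  rw [← card_image_of_injOn (hmono.injOn.mono (filter_subset _ s)),
    ← filter_image (p := (· = r)), himage]
  split_ifs with hr
  · exact card_eq_one.2 ⟨r, by ext; simp [hr]⟩
  · exact card_eq_zero.2 (filter_eq_empty_iff.2 fun k hk h => hr (h ▸ mem_range.1 hk))

theorem Function.Involutive.ker_sym2_rel_iff {V : Type*} {σ : V → V} (hσ : σ.Involutive)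
    {x y : V} : (Setoid.ker fun v => s(v, σ v)).r x y ↔ y = x ∨ y = σ x := by
  change s(x, σ x) = s(y, σ y) ↔ _
  rw [Sym2.eq_iff]
  constructor
  · rintro (⟨rfl, -⟩ | ⟨-, rfl⟩)
    · exact .inl rfl
    · exact .inr rfl
  · rintro (rfl | rfl)
    · exact .inl ⟨rfl, rfl⟩
    · exact .inr ⟨(hσ x).symm, rfl⟩

namespace Dgm

variable {n : ℕ}

theorem swapUD_involutive : Function.Involutive (swapUD : PBV n → PBV n) := by
  rintro (i | i) <;> rfl

theorem pstar_r {α : Dgm n} {x y : PBV n} : (pstar α).r x y ↔ α.r (swapUD x) (swapUD y) :=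
  Iff.rfl

def collapseMid : V3 n → PBV n
  | .inl i => .inl i
  | .inr (.inl i) => .inl i
  | .inr (.inr i) => .inr i

theorem pmul_self_of_pstar_eq {α : Dgm n} (hstar : pstar α = α)
    (hvert : ∀ i j, α.r (.inl i) (.inr j) → i = j) : pmul α α = α := by
  have hswap : ∀ {x y}, α.r x y → α.r (swapUD x) (swapUD y) := fun h => by
    rwa [← hstar] at h
  -- Collapsing the middle row onto the top row maps the product graph into `α`: lower-lower
  -- edges of the upper copy land in `α` by self-adjointness, its transversals collapse to loops.
  have hcollapse : ∀ u v : V3 n, RGen (prodEdges α α) u v →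
      α.r (collapseMid u) (collapseMid v) := by
    intro u v huv
    induction huv with
    | rel h =>
      rcases h with ⟨a, b, hab, rfl, rfl⟩ | ⟨a, b, hab, rfl, rfl⟩
      · rcases a with i | i <;> rcases b with j | j
        · exact hab
        · obtain rfl := hvert i j hab; exact α.iseqv.refl _
        · obtain rfl := hvert j i (α.iseqv.symm hab); exact α.iseqv.refl _
        · exact hswap hab
      · rcases a with i | i <;> rcases b with j | j <;> exact hab
    | refl => exact α.iseqv.refl _
    | symm _ ih => exact α.iseqv.symm ih
    | trans _ _ ih₁ ih₂ => exact α.iseqv.trans ih₁ ih₂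
  ext x y
  constructor
  · intro h
    have := hcollapse _ _ h
    rcases x with i | i <;> rcases y with j | j <;> exact this
  · intro h
    rcases x with i | i <;> rcases y with j | j
    · exact RGen.rel (.inl ⟨.inl i, .inl j, h, rfl, rfl⟩)
    · obtain rfl := hvert i j h
      exact (RGen.rel (.inl ⟨.inl i, .inr i, h, rfl, rfl⟩)).trans
        (RGen.rel (.inr ⟨.inl i, .inr i, h, rfl, rfl⟩))
    · obtain rfl : i = j := (hvert j i (α.iseqv.symm h)).symm
      exact (RGen.rel (.inr ⟨.inr i, .inl i, h, rfl, rfl⟩)).trans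
        (RGen.rel (.inl ⟨.inr i, .inl i, h, rfl, rfl⟩))
    · exact RGen.rel (.inr ⟨.inr i, .inr j, h, rfl, rfl⟩)

theorem IsPB.r_iff {α : Dgm n} (hPB : IsPB α) {x y z : PBV n} (hxz : α.r x z) (hne : x ≠ z) :
    α.r x y ↔ y = x ∨ y = z := by
  refine ⟨fun hxy => ?_, ?_⟩
  · rcases hPB _ _ _ hxy hxz with h | h | h
    · exact .inl h.symm
    · exact absurd h hne
    · exact .inr h
  · rintro (rfl | rfl)
    · exact α.iseqv.refl _
    · exact hxz

theorem IsProj.eq_of_r_inl_inr {α : Dgm n} (hPB : IsPB α) (hα : IsProj α) {i j : Fin n}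
    (hij : α.r (.inl i) (.inr j)) : i = j := by
  have hji : α.r (.inl j) (.inr i) := by
    rw [← hα.2]; exact α.iseqv.symm hij
  have hii : (pmul α α).r (.inl i) (.inr i) :=
    (RGen.rel (.inl ⟨.inl i, .inr j, hij, rfl, rfl⟩)).trans
      (RGen.rel (.inr ⟨.inl j, .inr i, hji, rfl, rfl⟩))
  rw [hα.1] at hii
  rcases hPB _ _ _ hij hii with h | h | h <;> simp_all

end Dgm

/-- The letter of a projection of `M_n` at a point `i`: `hook j` stands for the blocks
`{i, j}` and `{i', j'}`, `vert` for the transversal `{i, i'}`, and `single` for the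
singletons `{i}` and `{i'}`. -/
inductive Letter (n : ℕ) where
  | hook : Fin n → Letter n
  | vert : Letter n
  | single : Letter n
  deriving Fintype

abbrev Pattern (n : ℕ) := Fin n → Letter n

namespace Pattern

open Dgm

variable {n : ℕ}

def Nests (t : Pattern n) (i j k : Fin n) : Prop := t i = .hook j ∧ i < k ∧ k < j

structure IsValid (t : Pattern n) : Prop where
  hook_ne : ∀ {i j}, t i = .hook j → j ≠ i
  hook_symm : ∀ {i j}, t i = .hook j → t j = .hook i
  noncrossing : ∀ {i j k l}, t i = .hook j → t k = .hook l → i < k → k < j → j < l → False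
  vert_unnested : ∀ {i j k}, t.Nests i j k → t k ≠ .vert
  single_nested : ∀ {k}, t k = .single → ∃ i j, t.Nests i j k

def rank (t : Pattern n) : ℕ := #{i | t i = .vert}

theorem rank_le (t : Pattern n) : t.rank ≤ n :=
  (card_filter_le _ _).trans (card_fin n).le

def upperPartner (t : Pattern n) (i : Fin n) : PBV n :=
  match t i with
  | .hook j => .inl j
  | .vert => .inr i
  | .single => .inl i

/-- The other element of the block of a vertex (the vertex itself for a singleton). -/
def partner (t : Pattern n) : PBV n → PBV n
  | .inl i => t.upperPartner i
  | .inr i => swapUD (t.upperPartner i)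

abbrev toDgm (t : Pattern n) : Dgm n := Setoid.ker fun x => s(x, t.partner x)

theorem partner_swapUD (t : Pattern n) (x : PBV n) :
    t.partner (swapUD x) = swapUD (t.partner x) := by
  rcases x with i | i
  · rfl
  · exact (swapUD_involutive _).symm

theorem partner_involutive {t : Pattern n} (ht : t.IsValid) : t.partner.Involutive := by
  have hupper : ∀ i, t.partner (t.partner (.inl i)) = .inl i := by
    intro i
    rcases hi : t i with j | _ | _
    · simp [partner, upperPartner, hi, ht.hook_symm hi]
    all_goals simp [partner, upperPartner, hi, swapUD]
  rintro (i | i)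
  · exact hupper i
  · change t.partner (t.partner (swapUD (.inl i))) = swapUD (.inl i)
    rw [partner_swapUD, partner_swapUD, hupper]

theorem toDgm_r {t : Pattern n} (ht : t.IsValid) {x y : PBV n} :
    t.toDgm.r x y ↔ y = x ∨ y = t.partner x :=
  (partner_involutive ht).ker_sym2_rel_iff

variable {t : Pattern n}

theorem isPB_toDgm (ht : t.IsValid) : IsPB t.toDgm := by
  intro x y z hy hz
  rw [toDgm_r ht] at hy hz
  rcases hy with rfl | rfl <;> rcases hz with rfl | rfl <;> simp

theorem pstar_toDgm (ht : t.IsValid) : pstar t.toDgm = t.toDgm := by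
  ext x y
  rw [pstar_r, toDgm_r ht, toDgm_r ht, partner_swapUD, swapUD_involutive.injective.eq_iff,
    swapUD_involutive.injective.eq_iff]

theorem eq_of_toDgm_r_inl_inr (ht : t.IsValid) {i j : Fin n}
    (h : t.toDgm.r (.inl i) (.inr j)) : i = j := by
  rw [toDgm_r ht] at h
  rcases hi : t i with k | _ | _ <;> simp_all [partner, upperPartner]

theorem isProj_toDgm (ht : t.IsValid) : IsProj t.toDgm :=
  ⟨pmul_self_of_pstar_eq (pstar_toDgm ht) fun _ _ => eq_of_toDgm_r_inl_inr ht, pstar_toDgm ht⟩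

theorem isPlanar_toDgm (ht : t.IsValid) : IsPlanar t.toDgm := by
  intro a b c d hab hcd hac hcb hbd
  rw [toDgm_r ht] at hab hcd
  rcases hab with rfl | rfl
  · omega
  rcases hcd with rfl | rfl
  · omega
  -- Given the positions, only two crossing hooks or a vertical under a hook (in the upper or
  -- the lower row) survive the case split.
  rcases a with i | i <;> rcases c with k | k <;>
    rcases hi : t i with j | _ | _ <;> rcases hk : t k with l | _ | _ <;>
    simp only [partner, upperPartner, hi, hk, swapUD, vpos] at hac hcb hbd <;>
    have := i.isLt <;> have := k.isLt <;> (try omega)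
  · exact ht.noncrossing hi hk (by omega) (by omega) (by omega)
  · exact ht.vert_unnested ⟨hi, by omega, by omega⟩ hk
  · exact ht.vert_unnested ⟨ht.hook_symm hk, by omega, by omega⟩ hi
  · exact ht.noncrossing (ht.hook_symm hk) (ht.hook_symm hi) (by omega) (by omega) (by omega)

theorem eq_single_of_upperPartner_eq (ht : t.IsValid) {i : Fin n}
    (h : t.upperPartner i = .inl i) : t i = .single := by
  rcases hi : t i with j | _ | _ <;> simp only [upperPartner, hi, reduceCtorEq] at h
  · exact absurd (Sum.inl_injective h) (ht.hook_ne hi)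
  · rfl

theorem noUnnestedSingleton_toDgm (ht : t.IsValid) : NoUnnestedSingleton t.toDgm := by
  have hnests : ∀ {x}, t.upperPartner x = .inl x → ∃ u v, t.Nests u v x := fun hx =>
    ht.single_nested (eq_single_of_upperPartner_eq ht hx)
  constructor
  · intro x hx
    obtain ⟨u, v, huv, hux, hxv⟩ := hnests (hx _ ((toDgm_r ht).2 (.inr rfl)))
    exact ⟨u, v, (toDgm_r ht).2 (.inr (by simp [partner, upperPartner, huv])), hux, hxv⟩
  · intro x hx
    obtain ⟨u, v, huv, hux, hxv⟩ :=
      hnests (swapUD_involutive.injective (hx _ ((toDgm_r ht).2 (.inr rfl))))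
    exact ⟨u, v, (toDgm_r ht).2 (.inr (by simp [partner, upperPartner, huv, swapUD])), hux, hxv⟩

theorem prank_toDgm (ht : t.IsValid) : prank t.toDgm = t.rank := by
  have hdom : domSet t.toDgm = ↑({i | t i = .vert} : Finset (Fin n)) := by
    ext i
    simp only [domSet, toDgm_r ht, Set.mem_ofPred_eq, coe_filter, mem_univ, true_and]
    rcases hi : t i with j | _ | _ <;> simp [partner, upperPartner, hi]
  rw [prank, hdom, Set.ncard_coe_finset, rank]

end Pattern

namespace Dgm

open Pattern

variable {n : ℕ} {α : Dgm n}

def toPattern (α : Dgm n) : Pattern n := fun i =>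
  if h : ∃ j, j ≠ i ∧ α.r (.inl i) (.inl j) then .hook h.choose
  else if α.r (.inl i) (.inr i) then .vert else .single

theorem toPattern_eq_hook_iff (hPB : IsPB α) {i j : Fin n} :
    α.toPattern i = .hook j ↔ j ≠ i ∧ α.r (.inl i) (.inl j) := by
  unfold toPattern
  split_ifs with h₁ h₂
  · refine ⟨fun h => Letter.hook.inj h ▸ h₁.choose_spec, fun ⟨hji, hij⟩ => ?_⟩
    rcases hPB _ _ _ h₁.choose_spec.2 hij with h | h | h
    · exact absurd (Sum.inl_injective h).symm h₁.choose_spec.1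
    · exact absurd (Sum.inl_injective h).symm hji
    · rw [Sum.inl_injective h]
  · exact iff_of_false (by simp) fun h => h₁ ⟨j, h⟩
  · exact iff_of_false (by simp) fun h => h₁ ⟨j, h⟩

theorem toPattern_eq_vert_iff (hPB : IsPB α) {i : Fin n} :
    α.toPattern i = .vert ↔ α.r (.inl i) (.inr i) := by
  unfold toPattern
  split_ifs with h₁ h₂
  · refine iff_of_false (by simp) fun h => ?_
    have := (hPB.r_iff h₁.choose_spec.2 (by simpa using h₁.choose_spec.1.symm)).1 h
    simp at this
  · exact iff_of_true rfl h₂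
  · exact iff_of_false (by simp) h₂

theorem r_inl_iff (hPB : IsPB α) (hvert : ∀ i j, α.r (.inl i) (.inr j) → i = j)
    {i : Fin n} {y : PBV n} : α.r (.inl i) y ↔ y = .inl i ∨ y = α.toPattern.upperPartner i := by
  rcases hi : α.toPattern i with j | _ | _
  · obtain ⟨hji, hij⟩ := (toPattern_eq_hook_iff hPB).1 hi
    simpa [upperPartner, hi] using hPB.r_iff hij (by simpa using hji.symm)
  · simpa [upperPartner, hi] using hPB.r_iff ((toPattern_eq_vert_iff hPB).1 hi) (by simp)
  · simp only [upperPartner, hi, or_self]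
    refine ⟨fun hiy => ?_, fun h => h ▸ α.iseqv.refl _⟩
    rcases y with j | j
    · by_contra hji
      have := (toPattern_eq_hook_iff hPB).2 ⟨fun h => hji (congrArg Sum.inl h), hiy⟩
      simp_all
    · obtain rfl := hvert i j hiy
      have := (toPattern_eq_vert_iff hPB).2 hiy
      simp_all

theorem upperSingleton_of_toPattern_eq_single (hPB : IsPB α)
    (hvert : ∀ i j, α.r (.inl i) (.inr j) → i = j) {i : Fin n}
    (hi : α.toPattern i = .single) : UpperSingleton α i := fun y hy => by
  simpa [upperPartner, hi] using (r_inl_iff hPB hvert).1 hy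

theorem isValid_toPattern (hPB : IsPB α) (hPl : IsPlanar α)
    (hvert : ∀ i j, α.r (.inl i) (.inr j) → i = j) (hnus : NoUnnestedSingleton α) :
    α.toPattern.IsValid where
  hook_ne h := ((toPattern_eq_hook_iff hPB).1 h).1
  hook_symm h := by
    obtain ⟨hji, hij⟩ := (toPattern_eq_hook_iff hPB).1 h
    exact (toPattern_eq_hook_iff hPB).2 ⟨hji.symm, α.iseqv.symm hij⟩
  noncrossing hij hkl hik hkj hjl :=
    hPl _ _ _ _ ((toPattern_eq_hook_iff hPB).1 hij).2 ((toPattern_eq_hook_iff hPB).1 hkl).2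
      hik hkj hjl
  vert_unnested := by
    rintro i j k ⟨hij, hik, hkj⟩ hk
    refine hPl _ _ _ (.inr k) ((toPattern_eq_hook_iff hPB).1 hij).2
      ((toPattern_eq_vert_iff hPB).1 hk) hik hkj ?_
    simp only [vpos]
    omega
  single_nested hk := by
    obtain ⟨u, v, huv, huk, hkv⟩ :=
      hnus.1 _ (upperSingleton_of_toPattern_eq_single hPB hvert hk)
    exact ⟨u, v, (toPattern_eq_hook_iff hPB).2 ⟨(huk.trans hkv).ne', huv⟩, huk, hkv⟩

theorem rank_toPattern (hPB : IsPB α) (hvert : ∀ i j, α.r (.inl i) (.inr j) → i = j) :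
    α.toPattern.rank = prank α := by
  have hdom : domSet α = ↑({i | α.toPattern i = .vert} : Finset (Fin n)) := by
    ext i
    simp only [domSet, Set.mem_ofPred_eq, coe_filter, mem_univ, true_and,
      toPattern_eq_vert_iff hPB]
    exact ⟨fun ⟨j, hij⟩ => hvert i j hij ▸ hij, fun h => ⟨i, h⟩⟩
  rw [prank, hdom, Set.ncard_coe_finset, rank]

theorem toDgm_toPattern (hPB : IsPB α) (hstar : pstar α = α)
    (hvert : ∀ i j, α.r (.inl i) (.inr j) → i = j) (ht : α.toPattern.IsValid) :
    α.toPattern.toDgm = α := by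
  ext x y
  rw [toDgm_r ht]
  rcases x with i | i
  · exact (r_inl_iff hPB hvert).symm
  · have hswap : α.r (.inr i) y ↔ α.r (.inl i) (swapUD y) := by
      conv_lhs => rw [← hstar]
      rfl
    rw [hswap, r_inl_iff hPB hvert, swapUD_involutive.eq_iff, swapUD_involutive.eq_iff]
    rfl

end Dgm

namespace Pattern

open Dgm

variable {n : ℕ} {t : Pattern n}

theorem toPattern_toDgm (ht : t.IsValid) : t.toDgm.toPattern = t := by
  have hPB := isPB_toDgm ht
  funext i
  rcases hi : t i with j | _ | _
  · exact (toPattern_eq_hook_iff hPB).2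
      ⟨ht.hook_ne hi, (toDgm_r ht).2 (.inr (by simp [partner, upperPartner, hi]))⟩
  · exact (toPattern_eq_vert_iff hPB).2
      ((toDgm_r ht).2 (.inr (by simp [partner, upperPartner, hi])))
  · have hrel : ∀ y, t.toDgm.r (.inl i) y → y = .inl i := fun y hy => by
      simpa [partner, upperPartner, hi] using (toDgm_r ht).1 hy
    rcases h : t.toDgm.toPattern i with j | _ | _
    · obtain ⟨hji, hij⟩ := (toPattern_eq_hook_iff hPB).1 h
      exact absurd (Sum.inl_injective (hrel _ hij)) hji
    · simpa using hrel _ ((toPattern_eq_vert_iff hPB).1 h)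
    · rfl

end Pattern

def validPatterns (n r : ℕ) : Finset (Pattern n) := {t | t.IsValid ∧ t.rank = r}

@[simp]
theorem mem_validPatterns {n r : ℕ} {t : Pattern n} :
    t ∈ validPatterns n r ↔ t.IsValid ∧ t.rank = r := by
  simp [validPatterns]

open Pattern Dgm in
theorem pM'_eq_card_validPatterns (n r : ℕ) : pM' n r = #(validPatterns n r) := by
  have hS : ∀ α : Dgm n, α ∈ DM n r ∧ IsProj α ∧ NoUnnestedSingleton α →
      α.toPattern ∈ validPatterns n r ∧ α.toPattern.toDgm = α := by
    rintro α ⟨⟨⟨hPB, hPl⟩, rfl⟩, hproj, hnus⟩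
    have hvert : ∀ i j, α.r (.inl i) (.inr j) → i = j := fun _ _ => hproj.eq_of_r_inl_inr hPB
    have ht := isValid_toPattern hPB hPl hvert hnus
    exact ⟨mem_validPatterns.2 ⟨ht, rank_toPattern hPB hvert⟩,
      toDgm_toPattern hPB hproj.2 hvert ht⟩
  rw [pM', ← Set.ncard_coe_finset]
  refine Set.ncard_congr (fun α _ => α.toPattern) (fun α hα => (hS α hα).1) ?_ ?_
  · intro α β hα hβ h
    rw [← (hS α hα).2, ← (hS β hβ).2]
    exact congrArg toDgm h
  · intro t hmem
    obtain ⟨ht, rfl⟩ := mem_validPatterns.1 hmem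
    exact ⟨t.toDgm, ⟨⟨⟨isPB_toDgm ht, isPlanar_toDgm ht⟩, prank_toDgm ht⟩, isProj_toDgm ht,
      noUnnestedSingleton_toDgm ht⟩, toPattern_toDgm ht⟩

namespace Letter

variable {m : ℕ}

def castSucc : Letter m → Letter (m + 1)
  | .hook j => .hook j.castSucc
  | .vert => .vert
  | .single => .single

def restrict : Letter (m + 1) → Letter m
  | .hook j => if h : j = Fin.last m then .vert else .hook (j.castPred h)
  | .vert => .vert
  | .single => .single

@[simp] theorem castSucc_eq_hook_iff {a : Letter m} {y : Fin (m + 1)} :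
    a.castSucc = .hook y ↔ ∃ b, a = .hook b ∧ y = b.castSucc := by
  cases a <;> simp [castSucc, eq_comm]

@[simp] theorem castSucc_eq_vert_iff {a : Letter m} : a.castSucc = .vert ↔ a = .vert := by
  cases a <;> simp [castSucc]

@[simp] theorem castSucc_eq_single_iff {a : Letter m} : a.castSucc = .single ↔ a = .single := by
  cases a <;> simp [castSucc]

@[simp] theorem restrict_eq_hook_iff {a : Letter (m + 1)} {j : Fin m} :
    a.restrict = .hook j ↔ a = .hook j.castSucc := by
  rcases a with i | _ | _ <;> simp only [restrict, reduceCtorEq]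
  split_ifs with h
  · simp [h, (Fin.castSucc_ne_last j).symm]
  · simp [Fin.castPred_eq_iff_eq_castSucc]

@[simp] theorem restrict_eq_vert_iff {a : Letter (m + 1)} :
    a.restrict = .vert ↔ a = .vert ∨ a = .hook (Fin.last m) := by
  rcases a with i | _ | _ <;> simp only [restrict] <;> try split_ifs
  all_goals simp_all

@[simp] theorem restrict_eq_single_iff {a : Letter (m + 1)} :
    a.restrict = .single ↔ a = .single := by
  rcases a with i | _ | _ <;> simp only [restrict] <;> try split_ifs
  all_goals simp_all

theorem castSucc_restrict {a : Letter (m + 1)} (ha : a ≠ .hook (Fin.last m)) :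
    a.restrict.castSucc = a := by
  rcases a with j | _ | _
  · obtain ⟨j, rfl⟩ := Fin.exists_castSucc_eq.2 fun h => ha (h ▸ rfl)
    simp [restrict, castSucc, Fin.castSucc_ne_last]
  all_goals rfl

end Letter

namespace Pattern

section last

variable {m : ℕ}

theorem rank_succ (t : Pattern (m + 1)) :
    t.rank = #{k : Fin m | t k.castSucc = .vert} + if t (Fin.last m) = .vert then 1 else 0 := by
  rw [rank, card_filter, Fin.sum_univ_castSucc, card_filter]

theorem IsValid.ne_single_last {t : Pattern (m + 1)} (ht : t.IsValid) :
    t (Fin.last m) ≠ .single := fun h => by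
  obtain ⟨i, j, -, -, hj⟩ := ht.single_nested h
  exact (Fin.le_last j).not_gt hj

section dropLast

variable {t : Pattern (m + 1)}

/-- The common inverse of `snocVert` and `snocHook`. -/
def dropLast (t : Pattern (m + 1)) : Pattern m := fun k =>
  if t k.castSucc = .single ∧ ∀ i j, t.Nests i j k.castSucc → j = Fin.last m then .vert
  else (t k.castSucc).restrict

theorem dropLast_eq_hook_iff {k j : Fin m} :
    t.dropLast k = .hook j ↔ t k.castSucc = .hook j.castSucc := by
  unfold dropLast
  split_ifs with h
  · simp [h.1]
  · exact Letter.restrict_eq_hook_iff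

theorem dropLast_eq_vert_iff {k : Fin m} :
    t.dropLast k = .vert ↔ t k.castSucc = .vert ∨ t k.castSucc = .hook (Fin.last m) ∨
      (t k.castSucc = .single ∧ ∀ i j, t.Nests i j k.castSucc → j = Fin.last m) := by
  unfold dropLast
  split_ifs with h
  · exact iff_of_true rfl (.inr (.inr h))
  · rw [Letter.restrict_eq_vert_iff]
    tauto

theorem dropLast_eq_single_iff {k : Fin m} :
    t.dropLast k = .single ↔
      t k.castSucc = .single ∧ ∃ i j, t.Nests i j k.castSucc ∧ j ≠ Fin.last m := by
  unfold dropLast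
  split_ifs with h
  · simp only [false_iff, not_and, not_exists]
    exact fun _ i j hij hj => hj (h.2 i j hij)
  · simp_all

theorem isValid_dropLast (ht : t.IsValid) : t.dropLast.IsValid where
  hook_ne h hji := ht.hook_ne (dropLast_eq_hook_iff.1 h) (congrArg Fin.castSucc hji)
  hook_symm h := dropLast_eq_hook_iff.2 (ht.hook_symm (dropLast_eq_hook_iff.1 h))
  noncrossing hij hkl hik hkj hjl :=
    ht.noncrossing (dropLast_eq_hook_iff.1 hij) (dropLast_eq_hook_iff.1 hkl)
      (Fin.castSucc_lt_castSucc_iff.2 hik) (Fin.castSucc_lt_castSucc_iff.2 hkj)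
      (Fin.castSucc_lt_castSucc_iff.2 hjl)
  vert_unnested := by
    rintro i j k ⟨hij, hik, hkj⟩ hk
    have hnests : t.Nests i.castSucc j.castSucc k.castSucc :=
      ⟨dropLast_eq_hook_iff.1 hij, Fin.castSucc_lt_castSucc_iff.2 hik,
        Fin.castSucc_lt_castSucc_iff.2 hkj⟩
    rcases dropLast_eq_vert_iff.1 hk with h | h | ⟨-, h⟩
    · exact ht.vert_unnested hnests h
    · exact ht.noncrossing hnests.1 h hnests.2.1 hnests.2.2 (Fin.castSucc_lt_last j)
    · exact Fin.castSucc_ne_last j (h _ _ hnests)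
  single_nested := by
    intro k hk
    obtain ⟨-, i, j, ⟨hij, hik, hkj⟩, hj⟩ := dropLast_eq_single_iff.1 hk
    obtain ⟨j, rfl⟩ := Fin.exists_castSucc_eq.2 hj
    obtain ⟨i, rfl⟩ := Fin.exists_castSucc_eq.2 (hik.trans (Fin.castSucc_lt_last k)).ne
    exact ⟨i, j, dropLast_eq_hook_iff.2 hij, Fin.castSucc_lt_castSucc_iff.1 hik,
      Fin.castSucc_lt_castSucc_iff.1 hkj⟩

end dropLast

section snocVert

def snocVert (q : Pattern m) : Pattern (m + 1) := Fin.lastCases .vert fun k => (q k).castSucc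

variable {q : Pattern m}

@[simp] theorem snocVert_last : q.snocVert (Fin.last m) = .vert := Fin.lastCases_last

@[simp] theorem snocVert_castSucc (k : Fin m) : q.snocVert k.castSucc = (q k).castSucc :=
  Fin.lastCases_castSucc k

theorem snocVert_eq_hook_iff {x y : Fin (m + 1)} :
    q.snocVert x = .hook y ↔ ∃ a b, q a = .hook b ∧ x = a.castSucc ∧ y = b.castSucc := by
  induction x using Fin.lastCases with
  | last => simp [(Fin.castSucc_ne_last _).symm]
  | cast k => simp

theorem isValid_snocVert (hq : q.IsValid) : q.snocVert.IsValid where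
  hook_ne h := by
    obtain ⟨a, b, hab, rfl, rfl⟩ := snocVert_eq_hook_iff.1 h
    exact fun h => hq.hook_ne hab (Fin.castSucc_injective _ h)
  hook_symm h := by
    obtain ⟨a, b, hab, rfl, rfl⟩ := snocVert_eq_hook_iff.1 h
    simp [hq.hook_symm hab, Letter.castSucc]
  noncrossing hij hkl hik hkj hjl := by
    obtain ⟨a, b, hab, rfl, rfl⟩ := snocVert_eq_hook_iff.1 hij
    obtain ⟨c, d, hcd, rfl, rfl⟩ := snocVert_eq_hook_iff.1 hkl
    exact hq.noncrossing hab hcd (Fin.castSucc_lt_castSucc_iff.1 hik)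
      (Fin.castSucc_lt_castSucc_iff.1 hkj) (Fin.castSucc_lt_castSucc_iff.1 hjl)
  vert_unnested := by
    rintro i j k ⟨hij, hik, hkj⟩ hk
    obtain ⟨a, b, hab, rfl, rfl⟩ := snocVert_eq_hook_iff.1 hij
    obtain ⟨c, rfl⟩ := Fin.exists_castSucc_eq.2 (hkj.trans (Fin.castSucc_lt_last b)).ne
    exact hq.vert_unnested ⟨hab, Fin.castSucc_lt_castSucc_iff.1 hik,
      Fin.castSucc_lt_castSucc_iff.1 hkj⟩ (by simpa using hk)
  single_nested := by
    intro k hk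
    induction k using Fin.lastCases with
    | last => simp at hk
    | cast c =>
      obtain ⟨a, b, hab, hac, hcb⟩ := hq.single_nested (by simpa using hk)
      exact ⟨a.castSucc, b.castSucc, by simp [hab, Letter.castSucc],
        Fin.castSucc_lt_castSucc_iff.2 hac, Fin.castSucc_lt_castSucc_iff.2 hcb⟩

theorem rank_snocVert (q : Pattern m) : q.snocVert.rank = q.rank + 1 := by
  rw [rank_succ, snocVert_last, if_pos rfl]
  simp [rank]

theorem dropLast_snocVert (hq : q.IsValid) : q.snocVert.dropLast = q := by
  funext k
  rcases hk : q k with j | _ | _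
  · simp [dropLast_eq_hook_iff, hk, Letter.castSucc]
  · simp [dropLast_eq_vert_iff, hk, Letter.castSucc]
  · obtain ⟨a, b, hab, hak, hkb⟩ := hq.single_nested hk
    refine dropLast_eq_single_iff.2 ⟨by simp [hk, Letter.castSucc], a.castSucc, b.castSucc,
      ⟨by simp [hab, Letter.castSucc], ?_, ?_⟩, Fin.castSucc_ne_last b⟩
    · exact Fin.castSucc_lt_castSucc_iff.2 hak
    · exact Fin.castSucc_lt_castSucc_iff.2 hkb

theorem snocVert_dropLast {t : Pattern (m + 1)} (ht : t.IsValid) (hlast : t (Fin.last m) = .vert) :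
    t.dropLast.snocVert = t := by
  have hno_hook : ∀ i, t i ≠ .hook (Fin.last m) := fun i h => by
    simp [ht.hook_symm h] at hlast
  funext x
  induction x using Fin.lastCases with
  | last => rw [snocVert_last, hlast]
  | cast k =>
    rw [snocVert_castSucc, dropLast, if_neg, Letter.castSucc_restrict (hno_hook _)]
    rintro ⟨hk, honly⟩
    obtain ⟨i, j, hnests⟩ := ht.single_nested hk
    exact hno_hook i (honly i j hnests ▸ hnests.1)

end snocVert

section snocHook

/-- The verticals to the right of `u` would be nested by the new hook `{u, m + 1}`, so they
become singletons. -/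
def snocHook (q : Pattern m) (u : Fin m) : Pattern (m + 1) :=
  Fin.lastCases (.hook u.castSucc) fun k =>
    if k = u then .hook (Fin.last m) else if u < k ∧ q k = .vert then .single else (q k).castSucc

variable {q : Pattern m} {u : Fin m}

@[simp] theorem snocHook_last : q.snocHook u (Fin.last m) = .hook u.castSucc :=
  Fin.lastCases_last

theorem snocHook_castSucc (k : Fin m) : q.snocHook u k.castSucc =
    if k = u then .hook (Fin.last m) else if u < k ∧ q k = .vert then .single else (q k).castSucc :=
  Fin.lastCases_castSucc k

theorem snocHook_eq_hook_iff (hu : q u = .vert) {x y : Fin (m + 1)} :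
    q.snocHook u x = .hook y ↔
      (x = Fin.last m ∧ y = u.castSucc) ∨ (x = u.castSucc ∧ y = Fin.last m) ∨
        ∃ a b, q a = .hook b ∧ x = a.castSucc ∧ y = b.castSucc := by
  induction x using Fin.lastCases with
  | last => simp [eq_comm]
  | cast k =>
    rw [snocHook_castSucc]
    split_ifs with hku hk
    · subst hku; simp [eq_comm, hu]
    · simp [hku, hk.2]
    · simp [hku]

theorem snocHook_eq_vert_iff {x : Fin (m + 1)} :
    q.snocHook u x = .vert ↔ ∃ k, x = k.castSucc ∧ q k = .vert ∧ k < u := by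
  induction x using Fin.lastCases with
  | last => simp [(Fin.castSucc_ne_last _).symm]
  | cast k =>
    rw [snocHook_castSucc]
    split_ifs with hku hk
    · simp [hku]
    · simp [hk.1.not_gt]
    · simp only [Letter.castSucc_eq_vert_iff, Fin.castSucc_inj, exists_eq_left']
      exact ⟨fun h => ⟨h, lt_of_le_of_ne (not_lt.1 fun h' => hk ⟨h', h⟩) hku⟩, And.left⟩

theorem snocHook_eq_single_iff (hu : q u = .vert) {x : Fin (m + 1)} :
    q.snocHook u x = .single ↔
      ∃ k, x = k.castSucc ∧ (q k = .single ∨ (q k = .vert ∧ u < k)) := by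
  induction x using Fin.lastCases with
  | last => simp [(Fin.castSucc_ne_last _).symm]
  | cast k =>
    rw [snocHook_castSucc]
    split_ifs with hku hk
    · simp [hku, hu]
    · exact iff_of_true rfl ⟨k, rfl, .inr ⟨hk.2, hk.1⟩⟩
    · simp only [Letter.castSucc_eq_single_iff, Fin.castSucc_inj, exists_eq_left']
      exact ⟨.inl, fun h => h.resolve_right fun h' => hk ⟨h'.2, h'.1⟩⟩

theorem isValid_snocHook (hq : q.IsValid) (hu : q u = .vert) : (q.snocHook u).IsValid where
  hook_ne h := by
    rcases (snocHook_eq_hook_iff hu).1 h with ⟨rfl, rfl⟩ | ⟨rfl, rfl⟩ | ⟨a, b, hab, rfl, rfl⟩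
    · exact Fin.castSucc_ne_last u
    · exact (Fin.castSucc_ne_last u).symm
    · exact fun h => hq.hook_ne hab (Fin.castSucc_injective _ h)
  hook_symm h := by
    rcases (snocHook_eq_hook_iff hu).1 h with ⟨rfl, rfl⟩ | ⟨rfl, rfl⟩ | ⟨a, b, hab, rfl, rfl⟩
    · exact (snocHook_eq_hook_iff hu).2 (.inr (.inl ⟨rfl, rfl⟩))
    · exact (snocHook_eq_hook_iff hu).2 (.inl ⟨rfl, rfl⟩)
    · exact (snocHook_eq_hook_iff hu).2 (.inr (.inr ⟨b, a, hq.hook_symm hab, rfl, rfl⟩))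
  noncrossing hij hkl hik hkj hjl := by
    rcases (snocHook_eq_hook_iff hu).1 hij with ⟨rfl, rfl⟩ | ⟨rfl, rfl⟩ | ⟨a, b, hab, rfl, rfl⟩
    · exact (Fin.le_last _).not_gt hik
    · exact (Fin.le_last _).not_gt hjl
    rcases (snocHook_eq_hook_iff hu).1 hkl with ⟨rfl, rfl⟩ | ⟨rfl, rfl⟩ | ⟨c, d, hcd, rfl, rfl⟩
    · exact (Fin.le_last _).not_gt hkj
    · exact hq.vert_unnested ⟨hab, Fin.castSucc_lt_castSucc_iff.1 hik,
        Fin.castSucc_lt_castSucc_iff.1 hkj⟩ hu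
    · exact hq.noncrossing hab hcd (Fin.castSucc_lt_castSucc_iff.1 hik)
        (Fin.castSucc_lt_castSucc_iff.1 hkj) (Fin.castSucc_lt_castSucc_iff.1 hjl)
  vert_unnested := by
    rintro i j k ⟨hij, hik, hkj⟩ hk
    obtain ⟨c, rfl, hc, hcu⟩ := snocHook_eq_vert_iff.1 hk
    rcases (snocHook_eq_hook_iff hu).1 hij with ⟨rfl, rfl⟩ | ⟨rfl, rfl⟩ | ⟨a, b, hab, rfl, rfl⟩
    · exact (Fin.le_last _).not_gt hik
    · exact (Fin.castSucc_lt_castSucc_iff.1 hik).not_gt hcu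
    · exact hq.vert_unnested ⟨hab, Fin.castSucc_lt_castSucc_iff.1 hik,
        Fin.castSucc_lt_castSucc_iff.1 hkj⟩ hc
  single_nested := by
    intro k hk
    obtain ⟨c, rfl, hc | ⟨-, huc⟩⟩ := (snocHook_eq_single_iff hu).1 hk
    · obtain ⟨a, b, hab, hac, hcb⟩ := hq.single_nested hc
      exact ⟨a.castSucc, b.castSucc,
        (snocHook_eq_hook_iff hu).2 (.inr (.inr ⟨a, b, hab, rfl, rfl⟩)),
        Fin.castSucc_lt_castSucc_iff.2 hac, Fin.castSucc_lt_castSucc_iff.2 hcb⟩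
    · exact ⟨u.castSucc, Fin.last m, (snocHook_eq_hook_iff hu).2 (.inr (.inl ⟨rfl, rfl⟩)),
        Fin.castSucc_lt_castSucc_iff.2 huc, Fin.castSucc_lt_last c⟩

theorem rank_snocHook : (q.snocHook u).rank = #{k | q k = .vert ∧ k < u} := by
  rw [rank_succ, snocHook_last, if_neg (by simp), add_zero]
  simp [snocHook_eq_vert_iff]

theorem dropLast_snocHook (hq : q.IsValid) (hu : q u = .vert) : (q.snocHook u).dropLast = q := by
  funext k
  rcases hk : q k with j | _ | _
  · have hku : k ≠ u := fun h => by simp [h, hu] at hk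
    exact dropLast_eq_hook_iff.2 ((snocHook_eq_hook_iff hu).2 (.inr (.inr ⟨k, j, hk, rfl, rfl⟩)))
  · refine dropLast_eq_vert_iff.2 ?_
    rcases lt_trichotomy k u with hlt | rfl | hgt
    · exact .inl (snocHook_eq_vert_iff.2 ⟨k, rfl, hk, hlt⟩)
    · exact .inr (.inl ((snocHook_eq_hook_iff hu).2 (.inr (.inl ⟨rfl, rfl⟩))))
    refine .inr (.inr ⟨(snocHook_eq_single_iff hu).2 ⟨k, rfl, .inr ⟨hk, hgt⟩⟩, ?_⟩)
    rintro i j ⟨hij, hik, hkj⟩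
    rcases (snocHook_eq_hook_iff hu).1 hij with ⟨rfl, rfl⟩ | ⟨rfl, rfl⟩ | ⟨a, b, hab, rfl, rfl⟩
    · exact absurd hik (Fin.le_last _).not_gt
    · rfl
    · exact absurd hk (hq.vert_unnested ⟨hab, Fin.castSucc_lt_castSucc_iff.1 hik,
        Fin.castSucc_lt_castSucc_iff.1 hkj⟩)
  · obtain ⟨a, b, hab, hak, hkb⟩ := hq.single_nested hk
    refine dropLast_eq_single_iff.2 ⟨(snocHook_eq_single_iff hu).2 ⟨k, rfl, .inl hk⟩,
      a.castSucc, b.castSucc, ⟨?_, ?_, ?_⟩, Fin.castSucc_ne_last b⟩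
    · exact (snocHook_eq_hook_iff hu).2 (.inr (.inr ⟨a, b, hab, rfl, rfl⟩))
    · exact Fin.castSucc_lt_castSucc_iff.2 hak
    · exact Fin.castSucc_lt_castSucc_iff.2 hkb

end snocHook

section hookLast

variable {t : Pattern (m + 1)} {u : Fin m}

theorem IsValid.eq_of_eq_hook_last (ht : t.IsValid) {U x : Fin (m + 1)}
    (hlast : t (Fin.last m) = .hook U) (hx : t x = .hook (Fin.last m)) : x = U :=
  Letter.hook.inj ((ht.hook_symm hx).symm.trans hlast)

theorem IsValid.lt_of_nested_only_by_last (ht : t.IsValid)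
    (hlast : t (Fin.last m) = .hook u.castSucc) {k : Fin m} (hk : t k.castSucc = .single)
    (honly : ∀ i j, t.Nests i j k.castSucc → j = Fin.last m) : u < k := by
  obtain ⟨i, j, hnests⟩ := ht.single_nested hk
  obtain rfl := honly i j hnests
  obtain rfl := ht.eq_of_eq_hook_last hlast hnests.1
  exact Fin.castSucc_lt_castSucc_iff.1 hnests.2.1

theorem card_vert_lt_dropLast (ht : t.IsValid) (hlast : t (Fin.last m) = .hook u.castSucc) :
    #{k | t.dropLast k = .vert ∧ k < u} = t.rank := by
  have hu : t u.castSucc = .hook (Fin.last m) := ht.hook_symm hlast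
  rw [rank_succ, hlast, if_neg (by simp), add_zero]
  congr 1
  ext k
  simp only [mem_filter, mem_univ, true_and]
  constructor
  · rintro ⟨hk, hku⟩
    rcases dropLast_eq_vert_iff.1 hk with h | h | ⟨hs, honly⟩
    · exact h
    · exact absurd (Fin.castSucc_injective _ (ht.eq_of_eq_hook_last hlast h)) hku.ne
    · exact absurd (ht.lt_of_nested_only_by_last hlast hs honly) hku.not_gt
  · intro hk
    refine ⟨dropLast_eq_vert_iff.2 (.inl hk), ?_⟩
    rcases lt_trichotomy k u with hlt | rfl | hgt
    · exact hlt
    · simp [hu] at hk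
    · exact absurd hk (ht.vert_unnested ⟨hu, Fin.castSucc_lt_castSucc_iff.2 hgt,
        Fin.castSucc_lt_last k⟩)

theorem snocHook_dropLast (ht : t.IsValid) (hlast : t (Fin.last m) = .hook u.castSucc) :
    t.dropLast.snocHook u = t := by
  have hu : t u.castSucc = .hook (Fin.last m) := ht.hook_symm hlast
  funext x
  induction x using Fin.lastCases with
  | last => rw [snocHook_last, hlast]
  | cast k =>
    have hk_hook : t k.castSucc = .hook (Fin.last m) → k = u := fun h =>
      Fin.castSucc_injective _ (ht.eq_of_eq_hook_last hlast h)
    rw [snocHook_castSucc]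
    split_ifs with hku hk
    · rw [hku, hu]
    · rcases dropLast_eq_vert_iff.1 hk.2 with h | h | ⟨h, -⟩
      · exact absurd h (ht.vert_unnested ⟨hu, Fin.castSucc_lt_castSucc_iff.2 hk.1,
          Fin.castSucc_lt_last k⟩)
      · exact absurd (hk_hook h) hku
      · exact h.symm
    · rw [dropLast, if_neg, Letter.castSucc_restrict fun h => hku (hk_hook h)]
      rintro ⟨hs, honly⟩
      exact hk ⟨ht.lt_of_nested_only_by_last hlast hs honly,
        dropLast_eq_vert_iff.2 (.inr (.inr ⟨hs, honly⟩))⟩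

end hookLast

end last

/-- The data `(q, u)` from which `snocHook` builds the patterns of rank `r` ending in a hook. -/
def hookData (m r : ℕ) : Finset (Σ _ : Pattern m, Fin m) :=
  ({q | q.IsValid} : Finset (Pattern m)).sigma
    fun q => {u | q u = .vert ∧ #{k | q k = .vert ∧ k < u} = r}

@[simp]
theorem mem_hookData {m r : ℕ} {q : Pattern m} {u : Fin m} :
    ⟨q, u⟩ ∈ hookData m r ↔ q.IsValid ∧ q u = .vert ∧ #{k | q k = .vert ∧ k < u} = r := by
  simp [hookData]

theorem card_hookData (m r : ℕ) :
    #(hookData m r) = ∑ j ∈ Icc (r + 1) m, #(validPatterns m j) := by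
  have hcount : ∀ q : Pattern m,
      #{u | q u = .vert ∧ #{k | q k = .vert ∧ k < u} = r} = if r < q.rank then 1 else 0 := by
    intro q
    rw [rank, ← card_filter_card_filter_lt_eq]
    simp only [filter_filter]
  rw [hookData, card_sigma]
  simp only [hcount, sum_boole, Nat.cast_id, filter_filter]
  rw [card_eq_sum_card_fiberwise (f := rank) (t := Icc (r + 1) m)]
  · refine sum_congr rfl fun j hj => congrArg card ?_
    ext q
    simp only [mem_filter, mem_univ, true_and, mem_validPatterns]
    constructor
    · rintro ⟨⟨hq, -⟩, rfl⟩; exact ⟨hq, rfl⟩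
    · rintro ⟨hq, rfl⟩; exact ⟨⟨hq, (mem_Icc.1 hj).1⟩, rfl⟩
  · intro q hq
    rw [mem_coe, mem_filter] at hq
    exact mem_Icc.2 ⟨hq.2.2, rank_le q⟩

theorem card_filter_last_eq_vert (m r : ℕ) :
    #{t ∈ validPatterns (m + 1) r | t (Fin.last m) = .vert} =
      if r = 0 then 0 else #(validPatterns m (r - 1)) := by
  rcases r with _ | r
  · refine card_eq_zero.2 (filter_eq_empty_iff.2 fun t ht hlast => ?_)
    have := (mem_validPatterns.1 ht).2
    rw [rank_succ, if_pos hlast] at this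
    omega
  rw [if_neg r.succ_ne_zero, Nat.add_sub_cancel]
  refine card_nbij' dropLast snocVert ?_ ?_ ?_ ?_
  · intro t ht
    obtain ⟨⟨ht, hrank⟩, hlast⟩ := by simpa using mem_coe.1 ht
    refine mem_validPatterns.2 ⟨isValid_dropLast ht, ?_⟩
    rw [← snocVert_dropLast ht hlast, rank_snocVert] at hrank
    omega
  · intro q hmem
    obtain ⟨hq, rfl⟩ := mem_validPatterns.1 hmem
    simp [isValid_snocVert hq, rank_snocVert]
  · intro t ht
    obtain ⟨⟨ht, -⟩, hlast⟩ := by simpa using mem_coe.1 ht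
    exact snocVert_dropLast ht hlast
  · intro q hq
    exact dropLast_snocVert (mem_validPatterns.1 hq).1

theorem card_filter_last_ne_vert (m r : ℕ) :
    #{t ∈ validPatterns (m + 1) r | t (Fin.last m) ≠ .vert} = #(hookData m r) := by
  symm
  refine card_nbij (fun p => p.1.snocHook p.2) ?_ ?_ ?_
  · rintro ⟨q, u⟩ hp
    obtain ⟨hq, hu, hr⟩ := mem_hookData.1 hp
    simp [isValid_snocHook hq hu, rank_snocHook, hr]
  · rintro ⟨q, u⟩ hp ⟨q', u'⟩ hp' h
    rw [mem_coe, mem_hookData] at hp hp'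
    have hq : q = q' := by
      rw [← dropLast_snocHook hp.1 hp.2.1, ← dropLast_snocHook hp'.1 hp'.2.1]
      exact congrArg dropLast h
    subst hq
    have hu : u = u' := by
      simpa using congrFun h (Fin.last m)
    subst hu
    rfl
  · intro t ht
    obtain ⟨⟨ht, hr⟩, hne⟩ := by simpa using mem_coe.1 ht
    obtain ⟨U, hU⟩ : ∃ U, t (Fin.last m) = .hook U := by
      rcases h : t (Fin.last m) with U | _ | _
      · exact ⟨U, rfl⟩
      · exact absurd h hne
      · exact absurd h ht.ne_single_last
    obtain ⟨u, rfl⟩ := Fin.exists_castSucc_eq.2 (ht.hook_ne hU)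
    refine ⟨⟨t.dropLast, u⟩, ?_, snocHook_dropLast ht hU⟩
    exact mem_hookData.2 ⟨isValid_dropLast ht,
      dropLast_eq_vert_iff.2 (.inr (.inl (ht.hook_symm hU))),
      (card_vert_lt_dropLast ht hU).trans hr⟩

end Pattern

open Pattern in
theorem card_validPatterns_succ (m r : ℕ) :
    #(validPatterns (m + 1) r) = (if r = 0 then 0 else #(validPatterns m (r - 1))) +
      ∑ j ∈ Icc (r + 1) m, #(validPatterns m j) := by
  rw [← card_filter_add_card_filter_not (fun t => t (Fin.last m) = .vert),
    card_filter_last_eq_vert, card_filter_last_ne_vert, card_hookData]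

theorem card_validPatterns_zero : #(validPatterns 0 0) = 1 := by
  have hvalid : ∀ t : Pattern 0, t.IsValid := fun t =>
    ⟨by simp, by simp, by simp, by simp, by simp⟩
  refine card_eq_one.2 ⟨isEmptyElim, ?_⟩
  ext t
  simp [Subsingleton.elim t isEmptyElim, hvalid, Pattern.rank]

theorem card_validPatterns_of_lt {n r : ℕ} (h : n < r) : #(validPatterns n r) = 0 :=
  card_eq_zero.2 (filter_eq_empty_iff.2 fun t _ ht => (t.rank_le.trans_lt h).ne ht.2)

/-- The recurrence for the number `p'(n,r)` of projections in
`D_r(M_n)` having no unnested singleton block; terms with out-of-range indices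
are `0` (note `r - 1` is out of range when `r = 0`, whence the `if`). -/
theorem pM'_recurrence :
    pM' 0 0 = 1 ∧
    (∀ n r : ℕ, n < r → pM' n r = 0) ∧
    (∀ n r : ℕ, 1 ≤ n → r ≤ n →
      pM' n r = (if r = 0 then 0 else pM' (n - 1) (r - 1)) +
        ∑ j ∈ Finset.Icc (r + 1) (n - 1), pM' (n - 1) j) := by
  simp only [pM'_eq_card_validPatterns]
  refine ⟨card_validPatterns_zero, fun n r h => card_validPatterns_of_lt h, fun n r hn _ => ?_⟩
  obtain ⟨m, rfl⟩ := Nat.exists_eq_add_of_le' hn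
  rw [Nat.add_sub_cancel]
  exact card_validPatterns_succ m r
end
end

section
/- For every α ∈ D_r(PB_n) there exist idempotents β, δ ∈ E(D_r(PB_n)) and an element γ ∈ S_{[r]} such that α = β · λ_{dom(α)} · γ · ρ_{codom(α)} · δ. -/
/-!
Partial Brauer diagrams on `n` points are formalized as set partitions
(equivalence relations, i.e. `Setoid`s) of the vertex set
`{1,…,n} ∪ {1',…,n'}`, encoded as `Fin n ⊕ Fin n`
(`Sum.inl i` is the upper vertex `i`, `Sum.inr i` is the lower vertex `i'`),
all of whose blocks have size at most 2.  The product of two diagrams is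
defined via connectivity (paths) in the product graph, and the involution `*`
by interchanging the two rows of vertices.
-/

noncomputable section

open scoped Classical

open Dgm
/-!
A diagram all of whose blocks have at most two points is the same as an involution `m` of the
vertex set, the block of `x` being `{x, m x}`. If no middle vertex of the product graph lies on a
middle-row block of one factor and a non-singleton block of the other, every path in the product
graph has length at most two, and the product is again given by an explicit involution. Diagrams
made of transversals and singletons are partial bijections of `{1,…,n}`, and multiplying on the
right by one of them composes transversal parts.

Write `α` as an involution, and let `β` keep the upper non-transversal blocks of `α` and join `i`
to `i'` for `i ∈ dom α`; `δ` is its mirror image on the lower row. Both are idempotents of rank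
`r`. The product `β λ_A γ ρ_B` keeps the upper blocks of `α`, and its transversal part is the
composite of the partial bijections of `λ_A`, `γ` and `ρ_B`. This is the transversal part of `α`
when `γ` sends `k` to the index in `B = codom α` of the partner of the `k`-th element of
`A = dom α`. Multiplying by `δ` then puts back the lower blocks of `α`.
-/

theorem RGen.eq_of_rel {V β : Type*} {r : V → V → Prop} {f : V → β}
    (hf : ∀ u v, r u v → f u = f v) {u v : V} (h : RGen r u v) : f u = f v := by
  induction h with
  | rel h => exact hf _ _ h
  | refl => rfl
  | symm _ ih => exact ih.symm
  | trans _ _ ih₁ ih₂ => exact ih₁.trans ih₂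

namespace PEquiv

variable {α β : Type*}

def ofSubtypeEquiv {p : α → Prop} {q : β → Prop} [DecidablePred p] [DecidablePred q]
    (e : {a // p a} ≃ {b // q b}) : α ≃. β where
  toFun a := if h : p a then some (e ⟨a, h⟩) else none
  invFun b := if h : q b then some (e.symm ⟨b, h⟩) else none
  inv a b := by
    constructor
    · intro hb
      split_ifs at hb with h
      cases hb
      simp [(e.symm ⟨b, h⟩).2]
    · intro ha
      split_ifs at ha with h
      cases ha
      simp [(e ⟨a, h⟩).2]

theorem ofSubtypeEquiv_apply {p : α → Prop} {q : β → Prop} [DecidablePred p] [DecidablePred q]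
    (e : {a // p a} ≃ {b // q b}) (a : α) :
    ofSubtypeEquiv e a = if h : p a then some (e ⟨a, h⟩ : β) else none :=
  rfl

def isSomeEquiv (f : α ≃. β) : {a // (f a).isSome} ≃ {b // (f.symm b).isSome} where
  toFun a := ⟨(f a).get a.2, f.isSome_symm_get a.2⟩
  invFun b := ⟨(f.symm b).get b.2, f.symm.isSome_symm_get b.2⟩
  left_inv a := Subtype.ext <| Option.some_injective _ <| by
    rw [Option.some_get, eq_some_iff, Option.some_get]
  right_inv b := Subtype.ext <| Option.some_injective _ <| by
    rw [Option.some_get, ← eq_some_iff, Option.some_get]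

theorem some_isSomeEquiv_apply (f : α ≃. β) (a : {a // (f a).isSome}) :
    some (f.isSomeEquiv a : β) = f a :=
  Option.some_get _

theorem mem_of_isSome_ofSet {s : Set α} [DecidablePred (· ∈ s)] {a : α}
    (h : (ofSet s a).isSome) : a ∈ s := by
  obtain ⟨b, hb⟩ := Option.isSome_iff_exists.1 h
  obtain ⟨rfl, hmem⟩ := ofSet_eq_some_iff.1 hb
  exact hmem

end PEquiv

namespace Dgm

open Function

variable {n : ℕ} {m m' : PBV n → PBV n}

def ofInvolution (m : PBV n → PBV n) : Dgm n := Setoid.ker fun x => s(x, m x)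

theorem ofInvolution_rel (hm : Involutive m) {x y : PBV n} :
    (ofInvolution m).r x y ↔ x = y ∨ m x = y := by
  change s(x, m x) = s(y, m y) ↔ _
  rw [Sym2.eq_iff]
  constructor
  · rintro (⟨rfl, -⟩ | ⟨-, h⟩) <;> simp [*]
  · rintro (rfl | rfl) <;> simp [hm _]

theorem isPB_ofInvolution (hm : Involutive m) : IsPB (ofInvolution m) := by
  intro x y z hy hz
  rw [ofInvolution_rel hm] at hy hz
  grind

theorem IsPB.exists_involution {α : Dgm n} (hα : IsPB α) :
    ∃ m, Involutive m ∧ α = ofInvolution m := by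
  let m : PBV n → PBV n := fun x => if h : ∃ y, y ≠ x ∧ α.r x y then h.choose else x
  have rel_iff : ∀ x y, α.r x y ↔ x = y ∨ m x = y := by
    intro x y
    by_cases h : ∃ y, y ≠ x ∧ α.r x y
    · have hm : m x = h.choose := dif_pos h
      obtain ⟨hne, hrel⟩ := h.choose_spec
      refine ⟨fun hxy => ?_, ?_⟩
      · rcases hα x y h.choose hxy hrel with h' | h' | h' <;> grind
      · rintro (rfl | hxy)
        · exact α.iseqv.refl x
        · exact hxy ▸ hm ▸ hrel
    · have hm : m x = x := dif_neg h
      refine ⟨fun hxy => ?_, ?_⟩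
      · by_contra hne
        exact h ⟨y, Ne.symm (by grind), hxy⟩
      · rintro (rfl | hxy)
        · exact α.iseqv.refl x
        · rw [hm] at hxy
          exact hxy ▸ α.iseqv.refl x
  have hm : Involutive m := fun x => by
    rcases (rel_iff _ _).1 (α.iseqv.symm ((rel_iff x (m x)).2 (Or.inr rfl))) with h | h
    · rw [h, h]
    · exact h
  exact ⟨m, hm, Setoid.ext fun x y => (rel_iff x y).trans (ofInvolution_rel hm).symm⟩

theorem mem_domSet_ofInvolution (hm : Involutive m) {i : Fin n} :
    i ∈ domSet (ofInvolution m) ↔ ∃ j, m (.inl i) = .inr j := by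
  simp [domSet, ofInvolution_rel hm]

theorem mem_codomSet_ofInvolution (hm : Involutive m) {j : Fin n} :
    j ∈ codomSet (ofInvolution m) ↔ ∃ i, m (.inr j) = .inl i := by
  simp [codomSet, ofInvolution_rel hm]

theorem coe_domFinset (α : Dgm n) : (domFinset α : Set (Fin n)) = domSet α := by
  ext; simp [domFinset]

theorem coe_codomFinset (α : Dgm n) : (codomFinset α : Set (Fin n)) = codomSet α := by
  ext; simp [codomFinset]

theorem prank_eq_card_domFinset (α : Dgm n) : prank α = (domFinset α).card := by
  rw [prank, ← coe_domFinset, Set.ncard_coe_finset]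

/-- Follow `m`, then `m'` if `m` led into the middle row; a path that stops in the middle row
leaves the starting vertex a singleton. -/
def mulInvolution (m m' : PBV n → PBV n) : PBV n → PBV n
  | .inl i =>
    match m (.inl i) with
    | .inl j => .inl j
    | .inr j => (match m' (.inl j) with
      | .inl _ => .inl i
      | .inr k => .inr k)
  | .inr k =>
    match m' (.inr k) with
    | .inr j => .inr j
    | .inl j => (match m (.inr j) with
      | .inl i => .inl i
      | .inr _ => .inr k)

structure MulCompatible (m m' : PBV n → PBV n) : Prop where
  lower : ∀ i j, m (.inr i) = .inr j → i ≠ j → m' (.inl i) = .inl i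
  upper : ∀ i j, m' (.inl i) = .inl j → i ≠ j → m (.inr i) = .inr i

/-- Under `MulCompatible m m'`, a label of the component of a vertex in the product graph:
the block of the product formed by its top and bottom vertices, or, for a component inside the
middle row, its (at most two) middle vertices. -/
def componentKey (m m' : PBV n → PBV n) : V3 n → Sym2 (PBV n) ⊕ Sym2 (Fin n)
  | .inl i => .inl s(.inl i, mulInvolution m m' (.inl i))
  | .inr (.inr k) => .inl s(.inr k, mulInvolution m m' (.inr k))
  | .inr (.inl j) =>
    match m (.inr j), m' (.inl j) with
    | .inl i, _ => .inl s(.inl i, mulInvolution m m' (.inl i))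
    | _, .inr k => .inl s(.inr k, mulInvolution m m' (.inr k))
    | .inr a, .inl b => .inr s(a, b)

theorem componentKey_eq_of_edge (hm : Involutive m) (hm' : Involutive m')
    (hc : MulCompatible m m') {u v : V3 n} (h : prodEdges (ofInvolution m) (ofInvolution m') u v) :
    componentKey m m' u = componentKey m m' v := by
  rcases h with ⟨a, b, hab, rfl, rfl⟩ | ⟨a, b, hab, rfl, rfl⟩ <;>
    rw [ofInvolution_rel (by assumption)] at hab <;> rcases hab with rfl | rfl
  · rfl
  · rcases a with i | i <;> rcases hi : m _ with j | j <;> have hj := hm (.inl i) <;>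
      have hj' := hm (.inr i) <;> simp only [hi] at hj hj'
    · simp [componentKey, topMid, mulInvolution, hi, hj, Sym2.eq_swap]
    · simp [componentKey, topMid, hj]
    · simp [componentKey, topMid, hi]
    · rcases eq_or_ne i j with rfl | hij
      · rfl
      · simp [componentKey, topMid, hi, hj', hc.lower i j hi hij, hc.lower j i hj' hij.symm,
          Sym2.eq_swap]
  · rfl
  · rcases a with i | i <;> rcases hi : m' _ with j | j <;> have hj := hm' (.inl i) <;>
      have hj' := hm' (.inr i) <;> simp only [hi] at hj hj'
    · rcases eq_or_ne i j with rfl | hij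
      · rfl
      · simp [componentKey, midBot, hi, hj, hc.upper i j hi hij, hc.upper j i hj hij.symm,
          Sym2.eq_swap]
    · rcases hk : m (.inr i) with k | k
      · have hk' := hm (.inr i); rw [hk] at hk'
        simp [componentKey, midBot, mulInvolution, hi, hj, hk, hk', Sym2.eq_swap]
      · simp [componentKey, midBot, hi, hk]
    · rcases hk : m (.inr j) with k | k
      · have hk' := hm (.inr j); rw [hk] at hk'
        simp [componentKey, midBot, mulInvolution, hi, hj', hk, hk', Sym2.eq_swap]
      · simp [componentKey, midBot, hk, hj']
    · simp [componentKey, midBot, mulInvolution, hi, hj', Sym2.eq_swap]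

theorem rgen_topBot_mulInvolution (hm : Involutive m) (hm' : Involutive m') (x : PBV n) :
    RGen (prodEdges (ofInvolution m) (ofInvolution m')) (topBot x)
      (topBot (mulInvolution m m' x)) := by
  have edge₁ : ∀ a b, m a = b →
      RGen (prodEdges (ofInvolution m) (ofInvolution m')) (topMid a) (topMid b) :=
    fun a b h => .rel (.inl ⟨a, b, (ofInvolution_rel hm).2 (.inr h), rfl, rfl⟩)
  have edge₂ : ∀ a b, m' a = b →
      RGen (prodEdges (ofInvolution m) (ofInvolution m')) (midBot a) (midBot b) :=
    fun a b h => .rel (.inr ⟨a, b, (ofInvolution_rel hm').2 (.inr h), rfl, rfl⟩)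
  rcases x with i | k
  · rcases hi : m (.inl i) with j | j
    · simp only [mulInvolution, hi]
      exact edge₁ _ _ hi
    · rcases hj : m' (.inl j) with k | k
      · simp only [mulInvolution, hi, hj]
        exact .refl _
      · simp only [mulInvolution, hi, hj]
        exact (edge₁ _ _ hi).trans (edge₂ _ _ hj)
  · rcases hk : m' (.inr k) with j | j
    · rcases hj : m (.inr j) with i | i
      · simp only [mulInvolution, hk, hj]
        exact (edge₂ _ _ hk).trans (edge₁ _ _ hj)
      · simp only [mulInvolution, hk, hj]
        exact .refl _
    · simp only [mulInvolution, hk]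
      exact edge₂ _ _ hk

theorem pmul_ofInvolution (hm : Involutive m) (hm' : Involutive m') (hc : MulCompatible m m') :
    pmul (ofInvolution m) (ofInvolution m') = ofInvolution (mulInvolution m m') := by
  ext x y
  change RGen _ (topBot x) (topBot y) ↔ s(x, mulInvolution m m' x) = s(y, mulInvolution m m' y)
  constructor
  · intro h
    have := h.eq_of_rel (f := componentKey m m') fun _ _ => componentKey_eq_of_edge hm hm' hc
    rcases x with i | i <;> rcases y with j | j <;> simpa [componentKey, topBot] using this
  · rw [Sym2.eq_iff]
    rintro (⟨rfl, -⟩ | ⟨rfl, -⟩)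
    · exact .refl _
    · exact (rgen_topBot_mulInvolution hm hm' _).symm

def pequivInvolution (f : Fin n ≃. Fin n) : PBV n → PBV n
  | .inl i => (f i).elim (.inl i) .inr
  | .inr j => (f.symm j).elim (.inr j) .inl

theorem involutive_pequivInvolution (f : Fin n ≃. Fin n) : Involutive (pequivInvolution f) := by
  rintro (i | j)
  · rcases h : f i with _ | j
    · simp [pequivInvolution, h]
    · simp [pequivInvolution, h, (f.eq_some_iff).2 h]
  · rcases h : f.symm j with _ | i
    · simp [pequivInvolution, h]
    · simp [pequivInvolution, h, (f.eq_some_iff).1 h]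

def ofPEquiv (f : Fin n ≃. Fin n) : Dgm n := ofInvolution (pequivInvolution f)

/-- The block labels used in the definitions of `lamd` and `permDgm`. -/
def pequivLabel (f : Fin n ≃. Fin n) : PBV n → ℕ ⊕ ℕ
  | .inl i => (f i).elim (.inl i) fun j => .inr j
  | .inr j => .inr j

theorem pequivLabel_pequivInvolution (f : Fin n ≃. Fin n) (x : PBV n) :
    pequivLabel f (pequivInvolution f x) = pequivLabel f x := by
  rcases x with i | j
  · rcases h : f i <;> simp [pequivLabel, pequivInvolution, h]
  · rcases h : f.symm j with _ | i
    · simp [pequivInvolution, h]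
    · simp [pequivLabel, pequivInvolution, h, (f.eq_some_iff).1 h]

theorem ker_pequivLabel (f : Fin n ≃. Fin n) : Setoid.ker (pequivLabel f) = ofPEquiv f := by
  ext x y
  rw [ofPEquiv, ofInvolution_rel (involutive_pequivInvolution f), Setoid.ker_def]
  refine ⟨fun h => ?_, ?_⟩
  · rcases x with i | i <;> rcases y with j | j
    · rcases hi : f i <;> rcases hj : f j <;> simp_all [pequivLabel, Fin.val_inj]
      exact .inl (f.inj hi hj)
    · rcases hi : f i <;> simp_all [pequivLabel, pequivInvolution, Fin.val_inj]
    · rcases hj : f j <;> simp_all [pequivLabel, pequivInvolution, Fin.val_inj]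
      simp [(f.eq_some_iff).2 hj]
    · simp_all [pequivLabel, Fin.val_inj]
  · rintro (rfl | rfl)
    · rfl
    · exact (pequivLabel_pequivInvolution f x).symm

theorem pstar_ofPEquiv (f : Fin n ≃. Fin n) : pstar (ofPEquiv f) = ofPEquiv f.symm := by
  ext x y
  change (ofPEquiv f).r (swapUD x) (swapUD y) ↔ _
  rw [ofPEquiv, ofPEquiv, ofInvolution_rel (involutive_pequivInvolution _),
    ofInvolution_rel (involutive_pequivInvolution _)]
  rcases x with i | i <;> rcases y with j | j <;>
    simp only [swapUD, pequivInvolution, PEquiv.symm_symm] <;>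
    cases f i <;> cases f.symm i <;> simp

def indexPEquiv (A : Finset (Fin n)) : Fin n ≃. Fin n :=
  PEquiv.ofSubtypeEquiv <| (A.orderIsoOfFin rfl).symm.toEquiv.trans <|
    Fin.castLEquiv (A.card_le_univ.trans_eq (Fintype.card_fin n))

def permPEquiv {r : ℕ} (hr : r ≤ n) (π : Equiv.Perm (Fin r)) : Fin n ≃. Fin n :=
  PEquiv.ofSubtypeEquiv <| (Fin.castLEquiv hr).symm.trans <| π.trans <| Fin.castLEquiv hr

theorem lamd_eq_ofPEquiv (A : Finset (Fin n)) : lamd A = ofPEquiv (indexPEquiv A) := by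
  rw [← ker_pequivLabel]
  unfold lamd
  congr 1
  funext x
  rcases x with a | j
  · by_cases ha : a ∈ A <;> simp [pequivLabel, indexPEquiv, PEquiv.ofSubtypeEquiv_apply, ha]
  · rfl

theorem rhod_eq_ofPEquiv (A : Finset (Fin n)) : rhod A = ofPEquiv (indexPEquiv A).symm := by
  rw [rhod, lamd_eq_ofPEquiv, pstar_ofPEquiv]

theorem permDgm_eq_ofPEquiv {r : ℕ} (hr : r ≤ n) (π : Equiv.Perm (Fin r)) :
    permDgm n r π = ofPEquiv (permPEquiv hr π) := by
  rw [← ker_pequivLabel]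
  unfold permDgm
  congr 1
  funext x
  rcases x with a | j
  · by_cases ha : (a : ℕ) < r <;> simp [pequivLabel, permPEquiv, PEquiv.ofSubtypeEquiv_apply, ha]
  · rfl

theorem indexPEquiv_apply {A : Finset (Fin n)} {k : ℕ} (h : A.card = k) (hk : k ≤ n) {x : Fin n}
    (hx : x ∈ A) :
    indexPEquiv A x = some (Fin.castLE hk ((A.orderIsoOfFin h).symm ⟨x, hx⟩)) := by
  simp [indexPEquiv, PEquiv.ofSubtypeEquiv_apply, hx, Fin.ext_iff, Finset.orderIsoOfFin_symm_apply]

theorem permPEquiv_castLE {r : ℕ} (hr : r ≤ n) (π : Equiv.Perm (Fin r)) (k : Fin r) :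
    permPEquiv hr π (Fin.castLE hr k) = some (Fin.castLE hr (π k)) := by
  simp [permPEquiv, PEquiv.ofSubtypeEquiv_apply]

def indexPerm {A B : Finset (Fin n)} (t : A ≃ B) (h : B.card = A.card) :
    Equiv.Perm (Fin A.card) :=
  (A.orderIsoOfFin rfl).toEquiv.trans <| t.trans (B.orderIsoOfFin h).toEquiv.symm

theorem indexPEquiv_trans_permPEquiv_trans_symm {A B : Finset (Fin n)} (t : A ≃ B)
    (h : B.card = A.card) (hr : A.card ≤ n) :
    (indexPEquiv A).trans ((permPEquiv hr (indexPerm t h)).trans (indexPEquiv B).symm) =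
      PEquiv.ofSubtypeEquiv t := by
  ext1 i
  rw [PEquiv.ofSubtypeEquiv_apply]
  split_ifs with hi
  · have hπ : permPEquiv hr (indexPerm t h)
        (Fin.castLE hr ((A.orderIsoOfFin rfl).symm ⟨i, hi⟩)) =
        some (Fin.castLE hr ((B.orderIsoOfFin h).symm (t ⟨i, hi⟩))) := by
      rw [permPEquiv_castLE]
      simp [indexPerm]
    have hB : (indexPEquiv B).symm (Fin.castLE hr ((B.orderIsoOfFin h).symm (t ⟨i, hi⟩))) =
        some (t ⟨i, hi⟩ : Fin n) := by
      rw [PEquiv.eq_some_iff]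
      exact indexPEquiv_apply h hr (t ⟨i, hi⟩).2
    simp only [PEquiv.trans, PEquiv.coe_mk, indexPEquiv_apply rfl hr hi, Option.bind_some, hπ, hB]
  · simp [PEquiv.trans, indexPEquiv, PEquiv.ofSubtypeEquiv_apply, hi]

def transversals (hm : Involutive m) : Fin n ≃. Fin n where
  toFun i := (m (.inl i)).getRight?
  invFun j := (m (.inr j)).getLeft?
  inv i j := by
    simp only [Sum.getLeft?_eq_some_iff, Sum.getRight?_eq_some_iff]
    exact ⟨fun h => by rw [← h, hm], fun h => by rw [← h, hm]⟩

theorem transversals_apply (hm : Involutive m) (i : Fin n) :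
    transversals hm i = (m (.inl i)).getRight? := rfl

theorem transversals_symm_apply (hm : Involutive m) (j : Fin n) :
    (transversals hm).symm j = (m (.inr j)).getLeft? := rfl

theorem isSome_transversals_iff (hm : Involutive m) {i : Fin n} :
    (transversals hm i).isSome ↔ i ∈ domSet (ofInvolution m) := by
  simp [mem_domSet_ofInvolution hm, transversals_apply, Option.isSome_iff_exists,
    Sum.getRight?_eq_some_iff]

theorem isSome_transversals_symm_iff (hm : Involutive m) {j : Fin n} :
    ((transversals hm).symm j).isSome ↔ j ∈ codomSet (ofInvolution m) := by
  simp [mem_codomSet_ofInvolution hm, transversals_symm_apply, Option.isSome_iff_exists,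
    Sum.getLeft?_eq_some_iff]

def transversalEquiv (hm : Involutive m) :
    domFinset (ofInvolution m) ≃ codomFinset (ofInvolution m) :=
  (Equiv.subtypeEquivRight fun _ => by simp [domFinset, isSome_transversals_iff hm]).trans <|
    (transversals hm).isSomeEquiv.trans <|
      (Equiv.subtypeEquivRight fun _ => by simp [codomFinset, isSome_transversals_symm_iff hm]).symm

theorem card_codomFinset_ofInvolution (hm : Involutive m) :
    (codomFinset (ofInvolution m)).card = (domFinset (ofInvolution m)).card := by
  simpa using (Fintype.card_congr (transversalEquiv hm)).symm

theorem transversals_eq_ofSubtypeEquiv (hm : Involutive m) :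
    transversals hm = PEquiv.ofSubtypeEquiv (transversalEquiv hm) := by
  ext1 i
  rw [PEquiv.ofSubtypeEquiv_apply]
  split_ifs with hi
  · exact ((transversals hm).some_isSomeEquiv_apply
      ⟨i, (isSome_transversals_iff hm).2 (by simpa [domFinset] using hi)⟩).symm
  · simpa [domFinset, ← isSome_transversals_iff hm] using hi

theorem ofSet_domSet_trans_transversals (hm : Involutive m) :
    (PEquiv.ofSet (domSet (ofInvolution m))).trans (transversals hm) = transversals hm := by
  ext1 i
  by_cases hi : i ∈ domSet (ofInvolution m)
  · simp [PEquiv.trans, PEquiv.ofSet_eq_some_self_iff.2 hi]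
  · have : transversals hm i = none :=
      Option.not_isSome_iff_eq_none.1 (mt (isSome_transversals_iff hm).1 hi)
    simp [PEquiv.trans, PEquiv.ofSet, hi, this]

def transversalPerm (hm : Involutive m) : Equiv.Perm (Fin (domFinset (ofInvolution m)).card) :=
  indexPerm (transversalEquiv hm) (card_codomFinset_ofInvolution hm)

/-- The upper blocks of `m` that are not transversal, together with the transversals of `g`. -/
def withTransversals (m : PBV n → PBV n) (g : Fin n ≃. Fin n) : PBV n → PBV n
  | .inl i => (m (.inl i)).elim .inl fun _ => (g i).elim (.inl i) .inr
  | .inr j => (g.symm j).elim (.inr j) .inl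

theorem involutive_withTransversals (hm : Involutive m) {g : Fin n ≃. Fin n}
    (hg : ∀ i, (g i).isSome → i ∈ domSet (ofInvolution m)) :
    Involutive (withTransversals m g) := by
  rintro (i | j)
  · rcases hi : m (.inl i) with i' | k
    · have := hm (.inl i); rw [hi] at this
      simp [withTransversals, hi, this]
    · rcases hg' : g i with _ | j
      · simp [withTransversals, hi, hg']
      · simp [withTransversals, hi, hg', (g.eq_some_iff).2 hg']
  · rcases hj : g.symm j with _ | i
    · simp [withTransversals, hj]
    · have hgi := (g.eq_some_iff).1 hj
      obtain ⟨k, hk⟩ := (mem_domSet_ofInvolution hm).1 (hg i (by simp [hgi]))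
      simp [withTransversals, hj, hk, hgi]

theorem mulInvolution_withTransversals_pequivInvolution (g h : Fin n ≃. Fin n) :
    mulInvolution (withTransversals m g) (pequivInvolution h) = withTransversals m (g.trans h) := by
  funext x
  rcases x with i | l
  · rcases hi : m (.inl i) with j | j
    · simp [mulInvolution, withTransversals, hi]
    · rcases hg : g i with _ | k
      · simp [mulInvolution, withTransversals, hi, hg, PEquiv.trans]
      · rcases hh : h k with _ | l <;>
          simp [mulInvolution, withTransversals, pequivInvolution, hi, hg, hh, PEquiv.trans]
  · rw [withTransversals, PEquiv.symm_trans_rev]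
    rcases hh : h.symm l with _ | k
    · simp [mulInvolution, pequivInvolution, hh, PEquiv.trans]
    · rcases hg : g.symm k with _ | i <;>
        simp [mulInvolution, withTransversals, pequivInvolution, hh, hg, PEquiv.trans]

theorem pmul_withTransversals_ofPEquiv (hm : Involutive m) {g : Fin n ≃. Fin n}
    (hg : ∀ i, (g i).isSome → i ∈ domSet (ofInvolution m)) (h : Fin n ≃. Fin n) :
    pmul (ofInvolution (withTransversals m g)) (ofPEquiv h) =
      ofInvolution (withTransversals m (g.trans h)) := by
  have hc : MulCompatible (withTransversals m g) (pequivInvolution h) := by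
    constructor
    · intro i j hij hne
      rcases hi : g.symm i <;> simp_all [withTransversals]
    · intro i j hij hne
      rcases hi : h i <;> simp_all [pequivInvolution]
  rw [ofPEquiv, pmul_ofInvolution (involutive_withTransversals hm hg)
    (involutive_pequivInvolution h) hc, mulInvolution_withTransversals_pequivInvolution]

def leftIdempotent (m : PBV n → PBV n) : PBV n → PBV n
  | .inl i => (m (.inl i)).elim .inl fun _ => .inr i
  | .inr i => (m (.inl i)).elim (fun _ => .inr i) fun _ => .inl i

def rightIdempotent (m : PBV n → PBV n) : PBV n → PBV n
  | .inl j => (m (.inr j)).elim (fun _ => .inr j) fun _ => .inl j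
  | .inr j => (m (.inr j)).elim (fun _ => .inl j) .inr

theorem leftIdempotent_eq_withTransversals (hm : Involutive m) :
    leftIdempotent m = withTransversals m (.ofSet (domSet (ofInvolution m))) := by
  have hD : ∀ i, PEquiv.ofSet (domSet (ofInvolution m)) i =
      if ∃ j, m (.inl i) = .inr j then some i else none := fun i => by
    simp only [← mem_domSet_ofInvolution hm]; rfl
  funext x
  rcases x with i | i <;> rcases hi : m (.inl i) with j | j <;>
    simp [leftIdempotent, withTransversals, hD, hi]

theorem involutive_leftIdempotent (hm : Involutive m) : Involutive (leftIdempotent m) := by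
  rintro (i | i) <;> rcases hi : m (.inl i) with j | j
  · have := hm (.inl i); rw [hi] at this
    simp [leftIdempotent, hi, this]
  all_goals simp [leftIdempotent, hi]

theorem involutive_rightIdempotent (hm : Involutive m) : Involutive (rightIdempotent m) := by
  rintro (j | j) <;> rcases hj : m (.inr j) with i | i
  case inr.inr =>
    have := hm (.inr j); rw [hj] at this
    simp [rightIdempotent, hj, this]
  all_goals simp [rightIdempotent, hj]

theorem isIdpt_leftIdempotent (hm : Involutive m) : IsIdpt (ofInvolution (leftIdempotent m)) := by
  have hc : MulCompatible (leftIdempotent m) (leftIdempotent m) := by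
    constructor <;> intro i j hij hne <;> rcases hi : m (.inl i) <;> simp_all [leftIdempotent]
  have : mulInvolution (leftIdempotent m) (leftIdempotent m) = leftIdempotent m := by
    funext x
    rcases x with i | i <;> rcases hi : m (.inl i) with j | j <;>
      simp_all [mulInvolution, leftIdempotent]
  rw [IsIdpt, pmul_ofInvolution (involutive_leftIdempotent hm)
    (involutive_leftIdempotent hm) hc, this]

theorem isIdpt_rightIdempotent (hm : Involutive m) :
    IsIdpt (ofInvolution (rightIdempotent m)) := by
  have hc : MulCompatible (rightIdempotent m) (rightIdempotent m) := by
    constructor <;> intro i j hij hne <;> rcases hi : m (.inr i) <;> simp_all [rightIdempotent]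
  have : mulInvolution (rightIdempotent m) (rightIdempotent m) = rightIdempotent m := by
    funext x
    rcases x with j | j <;> rcases hj : m (.inr j) with i | i <;>
      simp_all [mulInvolution, rightIdempotent]
  rw [IsIdpt, pmul_ofInvolution (involutive_rightIdempotent hm)
    (involutive_rightIdempotent hm) hc, this]

theorem domSet_leftIdempotent (hm : Involutive m) :
    domSet (ofInvolution (leftIdempotent m)) = domSet (ofInvolution m) := by
  ext i
  rw [mem_domSet_ofInvolution (involutive_leftIdempotent hm), mem_domSet_ofInvolution hm]
  rcases hi : m (.inl i) <;> simp [leftIdempotent, hi]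

theorem domSet_rightIdempotent (hm : Involutive m) :
    domSet (ofInvolution (rightIdempotent m)) = codomSet (ofInvolution m) := by
  ext j
  rw [mem_domSet_ofInvolution (involutive_rightIdempotent hm), mem_codomSet_ofInvolution hm]
  rcases hj : m (.inr j) <;> simp [rightIdempotent, hj]

theorem pmul_withTransversals_rightIdempotent (hm : Involutive m) :
    pmul (ofInvolution (withTransversals m (transversals hm)))
      (ofInvolution (rightIdempotent m)) = ofInvolution m := by
  have hc : MulCompatible (withTransversals m (transversals hm)) (rightIdempotent m) := by
    constructor <;> intro i j hij hne
    · rcases hi : m (.inr i) <;> simp_all [withTransversals, transversals_symm_apply]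
    · rcases hi : m (.inr i) <;> simp_all [rightIdempotent]
  have : mulInvolution (withTransversals m (transversals hm)) (rightIdempotent m) = m := by
    funext x
    rcases x with i | k
    · rcases hi : m (.inl i) with j | j
      · simp [mulInvolution, withTransversals, hi]
      · have := hm (.inl i); rw [hi] at this
        simp [mulInvolution, withTransversals, rightIdempotent, transversals_apply, hi, this]
    · rcases hk : m (.inr k) with i | l
      · simp [mulInvolution, withTransversals, rightIdempotent, transversals_symm_apply, hk]
      · simp [mulInvolution, rightIdempotent, hk]
  rw [pmul_ofInvolution (involutive_withTransversals hm fun _ => (isSome_transversals_iff hm).1)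
    (involutive_rightIdempotent hm) hc, this]

theorem ofInvolution_eq_normal_form (hm : Involutive m) :
    ofInvolution m = pmul (pmul (pmul (pmul (ofInvolution (leftIdempotent m))
      (lamd (domFinset (ofInvolution m)))) (permDgm n _ (transversalPerm hm)))
      (rhod (codomFinset (ofInvolution m)))) (ofInvolution (rightIdempotent m)) := by
  have hr : (domFinset (ofInvolution m)).card ≤ n :=
    (Finset.card_le_univ _).trans_eq (Fintype.card_fin n)
  have hDom : ∀ i, (PEquiv.ofSet (domSet (ofInvolution m)) i).isSome →
      i ∈ domSet (ofInvolution m) :=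
    fun _ => PEquiv.mem_of_isSome_ofSet
  have hTrans {g : Fin n ≃. Fin n} (hg : ∀ i, (g i).isSome → i ∈ domSet (ofInvolution m))
      (h : Fin n ≃. Fin n) : ∀ i, (g.trans h i).isSome → i ∈ domSet (ofInvolution m) :=
    fun i hi => hg i (Option.isSome_of_isSome_bind hi)
  rw [leftIdempotent_eq_withTransversals hm, lamd_eq_ofPEquiv,
    pmul_withTransversals_ofPEquiv hm hDom, permDgm_eq_ofPEquiv hr,
    pmul_withTransversals_ofPEquiv hm (hTrans hDom _), rhod_eq_ofPEquiv,
    pmul_withTransversals_ofPEquiv hm (hTrans (hTrans hDom _) _), PEquiv.trans_assoc,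
    PEquiv.trans_assoc, transversalPerm, indexPEquiv_trans_permPEquiv_trans_symm,
    ← transversals_eq_ofSubtypeEquiv, ofSet_domSet_trans_transversals,
    pmul_withTransversals_rightIdempotent]

end Dgm

/-- Normal forms in `PB_n`: every `α ∈ D_r(PB_n)` factors as
`α = β · λ_{dom α} · γ · ρ_{codom α} · δ` with `β, δ ∈ E(D_r(PB_n))` and
`γ ∈ S_{[r]}`. -/
theorem normal_form_PB (n r : ℕ) (α : Dgm n) (hα : α ∈ DPB n r) :
    ∃ β δ γ : Dgm n,
      β ∈ DPB n r ∧ IsIdpt β ∧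
      δ ∈ DPB n r ∧ IsIdpt δ ∧
      γ ∈ SBr n r ∧
      α = pmul (pmul (pmul (pmul β (lamd (domFinset α))) γ) (rhod (codomFinset α))) δ := by
  obtain ⟨hPB, rfl⟩ := hα
  obtain ⟨m, hm, rfl⟩ := hPB.exists_involution
  rw [prank_eq_card_domFinset]
  refine ⟨_, _, permDgm n _ (transversalPerm hm),
    ⟨isPB_ofInvolution (involutive_leftIdempotent hm), ?_⟩, isIdpt_leftIdempotent hm,
    ⟨isPB_ofInvolution (involutive_rightIdempotent hm), ?_⟩, isIdpt_rightIdempotent hm,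
    ⟨_, rfl⟩, ofInvolution_eq_normal_form hm⟩
  · rw [prank, domSet_leftIdempotent hm, ← coe_domFinset, Set.ncard_coe_finset]
  · rw [prank, domSet_rightIdempotent hm, ← coe_codomFinset, Set.ncard_coe_finset,
      card_codomFinset_ofInvolution hm]
end
end

section
/- If 1 ≤ r ≤ n−2, then I_r(PB_n) = ⟨D_r(PB_n) ∪ D_{r−1}(PB_n)⟩ = ⟨E(D_r(PB_n) ∪ D_{r−1}(PB_n))⟩. -/
/-!
Partial Brauer diagrams on `n` points are formalized as set partitions
(equivalence relations, i.e. `Setoid`s) of the vertex set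
`{1,…,n} ∪ {1',…,n'}`, encoded as `Fin n ⊕ Fin n`
(`Sum.inl i` is the upper vertex `i`, `Sum.inr i` is the lower vertex `i'`),
all of whose blocks have size at most 2.  The product of two diagrams is
defined via connectivity (paths) in the product graph, and the involution `*`
by interchanging the two rows of vertices.
-/

noncomputable section

open scoped Classical

open Dgm
/-!
A partial Brauer diagram is the partition of the `2n` points into the orbits of an involution.
In the product graph of two such diagrams every vertex meets at most one edge of each factor
and a boundary vertex at most one edge in all, so the component of a boundary vertex is a path,
traced by applying the two involutions alternately; it contains at most one other boundary
vertex. This shows that `I_r` is closed under products, and it computes products: it suffices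
to exhibit the paths.

A diagram of rank `k` factors as `p δ q` with `p`, `q` projections of rank `k` and `δ` a
partial permutation. Projections of rank `r` and `r - 1` are idempotents of the top two
D-classes; one of smaller rank has, as `n ≥ r + 2`, free points `u` and `v` in different
blocks, and it is the product of the two projections of larger rank obtained by straightening
its block at `u`, respectively at `v`. A partial permutation is a product of transpositions
restricted to shifted domains. Moving `a ∈ A` to a free point `b` is a product `id_A p q id_A'`
of four projections, where the hooks `{b, c}` of `p` and `{c, a}` of `q` use a third free
point `c`; a transposition inside `A` is routed through a free point.
-/

lemma RGen.mem_iff {V : Type*} {r : V → V → Prop} {S : Set V}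
    (hS : ∀ u v, r u v → (u ∈ S ↔ v ∈ S)) {u v : V} (h : RGen r u v) : u ∈ S ↔ v ∈ S := by
  induction h with
  | rel h => exact hS _ _ h
  | refl => exact Iff.rfl
  | symm _ ih => exact ih.symm
  | trans _ _ ih₁ ih₂ => exact ih₁.trans ih₂

lemma genSet_mono {γ : Type*} (m : γ → γ → γ) {X Y : Set γ} (hXY : X ⊆ Y) :
    genSet m X ⊆ genSet m Y := by
  intro x hx
  induction hx with
  | base h => exact MClo.base (hXY h)
  | mul _ _ ih₁ ih₂ => exact MClo.mul ih₁ ih₂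

lemma Function.Involutive.apply_mem_pair_iff {α : Type*} {ν : α → α} (hν : Function.Involutive ν)
    (u x : α) : ν x ∈ ({u, ν u} : Set α) ↔ x ∈ ({u, ν u} : Set α) := by
  simp only [Set.mem_insert_iff, Set.mem_singleton_iff]
  rw [hν.eq_iff, hν.injective.eq_iff, or_comm]

lemma Function.Involutive.disjoint_pair {α : Type*} {ν : α → α} (hν : Function.Involutive ν)
    {u v : α} (hv : v ∉ ({u, ν u} : Set α)) : Disjoint ({u, ν u} : Set α) {v, ν v} := by
  rw [Set.disjoint_left]
  rintro x (rfl | rfl) (h | h)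
  exacts [hv (Or.inl h.symm), hv (Or.inr (by rw [h, hν]; rfl)), hv (Or.inr h.symm),
    hv (Or.inl (hν.injective h).symm)]

section Zigzag

open Function

variable {V : Type*} {s t : V → V} {p : V}

def zigzag (s t : V → V) (p : V) : ℕ → V
  | 0 => p
  | k + 1 => (if k % 2 = 0 then s else t) (zigzag s t p k)

@[simp] lemma zigzag_zero (s t : V → V) (p : V) : zigzag s t p 0 = p := rfl

lemma zigzag_succ (s t : V → V) (p : V) (k : ℕ) :
    zigzag s t p (k + 1) = (if k % 2 = 0 then s else t) (zigzag s t p k) := rfl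

lemma apply_zigzag_mem_range_left (hs : Involutive s) (k : ℕ) :
    s (zigzag s t p k) ∈ Set.range (zigzag s t p) := by
  by_cases hk : k % 2 = 0
  · exact ⟨k + 1, by rw [zigzag_succ, if_pos hk]⟩
  · obtain ⟨m, rfl⟩ : ∃ m, k = m + 1 := ⟨k - 1, by omega⟩
    exact ⟨m, by rw [zigzag_succ, if_pos (by omega), hs]⟩

lemma apply_zigzag_mem_range_right (ht : Involutive t) (htp : t p = p) (k : ℕ) :
    t (zigzag s t p k) ∈ Set.range (zigzag s t p) := by
  by_cases hk : k % 2 = 0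
  · obtain rfl | ⟨m, rfl⟩ : k = 0 ∨ ∃ m, k = m + 1 := by
      rcases k with _ | m
      exacts [Or.inl rfl, Or.inr ⟨m, rfl⟩]
    · exact ⟨0, htp.symm⟩
    · exact ⟨m, by rw [zigzag_succ, if_neg (by omega), ht]⟩
  · exact ⟨k + 1, by rw [zigzag_succ, if_neg hk]⟩

lemma zigzag_add_eq_of_eq {j₁ j₂ : ℕ} (h : zigzag s t p j₁ = zigzag s t p j₂)
    (hpar : j₁ % 2 = j₂ % 2) (d : ℕ) : zigzag s t p (j₁ + d) = zigzag s t p (j₂ + d) := by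
  induction d with
  | zero => exact h
  | succ d ih =>
    rw [← add_assoc, ← add_assoc, zigzag_succ, zigzag_succ, ih]
    by_cases h₂ : (j₁ + d) % 2 = 0
    · rw [if_pos h₂, if_pos (by omega)]
    · rw [if_neg h₂, if_neg (by omega)]

lemma zigzag_reflect (hs : Involutive s) (ht : Involutive t) {k : ℕ}
    (hfold : zigzag s t p (k + 1) = zigzag s t p k) {m : ℕ} (hm : m ≤ k) :
    zigzag s t p (k + 1 + m) = zigzag s t p (k - m) := by
  induction m with
  | zero => simpa using hfold
  | succ m ih =>
    rw [← add_assoc, zigzag_succ, ih (by omega), show k - m = k - (m + 1) + 1 by omega,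
      zigzag_succ]
    by_cases h₂ : (k + 1 + m) % 2 = 0
    · rw [if_pos h₂, if_pos (by omega), hs]
    · rw [if_neg h₂, if_neg (by omega), ht]

/-- Folding at `k` and at `0` (as `t p = p`) makes the walk periodic with period `2k + 2`. -/
lemma exists_le_zigzag_eq_of_fold (hs : Involutive s) (ht : Involutive t) (htp : t p = p)
    {k : ℕ} (hfold : zigzag s t p (k + 1) = zigzag s t p k) (j : ℕ) :
    ∃ i ≤ k, zigzag s t p j = zigzag s t p i := by
  have hback : zigzag s t p (2 * k + 1) = p := by
    simpa [show k + 1 + k = 2 * k + 1 by omega] using zigzag_reflect hs ht hfold le_rfl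
  have hper : ∀ d, zigzag s t p (2 * k + 2 + d) = zigzag s t p d := by
    simpa using zigzag_add_eq_of_eq (j₂ := 0)
      (by rw [zigzag_succ, if_neg (by omega), hback, htp]; rfl) (by omega)
  induction j using Nat.strong_induction_on with
  | _ j ih =>
    by_cases hj : j ≤ k
    · exact ⟨j, hj, rfl⟩
    by_cases hj₂ : j ≤ 2 * k + 1
    · refine ⟨k - (j - (k + 1)), by omega, ?_⟩
      rw [← zigzag_reflect hs ht hfold (by omega : j - (k + 1) ≤ k)]
      congr 1; omega
    · obtain ⟨i, hi, hji⟩ := ih (j - (2 * k + 2)) (by omega)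
      refine ⟨i, hi, ?_⟩
      rw [← hji, ← hper (j - (2 * k + 2))]
      congr 1; omega

lemma zigzag_fold_of_fixed (hs : Involutive s) (ht : Involutive t) {j : ℕ}
    (hfix : s (zigzag s t p (j + 1)) = zigzag s t p (j + 1) ∨
      t (zigzag s t p (j + 1)) = zigzag s t p (j + 1)) :
    zigzag s t p (j + 2) = zigzag s t p (j + 1) ∨ zigzag s t p (j + 1) = zigzag s t p j := by
  rw [zigzag_succ s t p (j + 1), zigzag_succ s t p j] at *
  by_cases hj : j % 2 = 0
  · rw [if_pos hj, if_neg (by omega)] at *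
    rcases hfix with h | h
    · right; rw [← h, hs]
    · left; exact h
  · rw [if_neg hj, if_pos (by omega)] at *
    rcases hfix with h | h
    · left; exact h
    · right; rw [← h, ht]

/-- A point of the walk fixed by `s` or by `t` is where the walk folds back, and the walk never
gets past its first fold. -/
lemma eq_of_mem_range_zigzag (hs : Involutive s) (ht : Involutive t) (htp : t p = p)
    {q₁ q₂ : V} (hq₁ : q₁ ∈ Set.range (zigzag s t p)) (hq₂ : q₂ ∈ Set.range (zigzag s t p))
    (hf₁ : s q₁ = q₁ ∨ t q₁ = q₁) (hf₂ : s q₂ = q₂ ∨ t q₂ = q₂)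
    (hp₁ : q₁ ≠ p) (hp₂ : q₂ ≠ p) : q₁ = q₂ := by
  have hfold : ∀ j, (s (zigzag s t p j) = zigzag s t p j ∨
      t (zigzag s t p j) = zigzag s t p j) → zigzag s t p j ≠ p →
      ∃ i, j = i + 1 ∧ (zigzag s t p (i + 2) = zigzag s t p (i + 1) ∨
        zigzag s t p (i + 1) = zigzag s t p i) := by
    rintro (_ | i) hf hp
    exacts [absurd rfl hp, ⟨i, rfl, zigzag_fold_of_fixed hs ht hf⟩]
  have hex : ∃ k, zigzag s t p (k + 1) = zigzag s t p k := by
    obtain ⟨j, rfl⟩ := hq₁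
    obtain ⟨i, -, h | h⟩ := hfold j hf₁ hp₁
    exacts [⟨i + 1, h⟩, ⟨i, h⟩]
  have key : ∀ q ∈ Set.range (zigzag s t p), (s q = q ∨ t q = q) → q ≠ p →
      q = zigzag s t p (Nat.find hex) := by
    rintro q ⟨j, rfl⟩ hf hp
    obtain ⟨i, hi, hji⟩ := exists_le_zigzag_eq_of_fold hs ht htp (Nat.find_spec hex) j
    rw [hji] at hf hp ⊢
    obtain ⟨i, rfl, h | h⟩ := hfold i hf hp
    · rw [le_antisymm hi (Nat.find_min' hex h)]
    · exact absurd (Nat.find_min' hex h) (by omega)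
  exact (key q₁ hq₁ hf₁ hp₁).trans (key q₂ hq₂ hf₂ hp₂).symm

end Zigzag

namespace Dgm

open Function Equiv

variable {n : ℕ}

@[simp] lemma topMid_inl (i : Fin n) : (topMid (.inl i) : V3 n) = .inl i := rfl
@[simp] lemma topMid_inr (i : Fin n) : (topMid (.inr i) : V3 n) = .inr (.inl i) := rfl
@[simp] lemma midBot_inl (i : Fin n) : (midBot (.inl i) : V3 n) = .inr (.inl i) := rfl
@[simp] lemma midBot_inr (i : Fin n) : (midBot (.inr i) : V3 n) = .inr (.inr i) := rfl
@[simp] lemma topBot_inl (i : Fin n) : (topBot (.inl i) : V3 n) = .inl i := rfl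
@[simp] lemma topBot_inr (i : Fin n) : (topBot (.inr i) : V3 n) = .inr (.inr i) := rfl

lemma topBot_injective : Injective (topBot (n := n)) := by
  rintro (a | a) (b | b) h <;> simp_all

/-! ### Diagrams of involutions -/

def ofInvol (θ : PBV n → PBV n) : Dgm n where
  r x y := x = y ∨ (θ x = y ∧ θ y = x)
  iseqv := by
    refine ⟨fun _ => Or.inl rfl, ?_, ?_⟩
    · rintro x y (rfl | ⟨h₁, h₂⟩)
      exacts [Or.inl rfl, Or.inr ⟨h₂, h₁⟩]
    · rintro x y z (rfl | ⟨h₁, h₂⟩) (rfl | ⟨h₃, h₄⟩)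
      exacts [Or.inl rfl, Or.inr ⟨h₃, h₄⟩, Or.inr ⟨h₁, h₂⟩, Or.inl (h₂ ▸ h₃)]

lemma ofInvol_rel_iff {θ : PBV n → PBV n} (hθ : Involutive θ) {x y : PBV n} :
    (ofInvol θ).r x y ↔ x = y ∨ θ x = y := by
  refine or_congr_right ⟨And.left, fun h => ⟨h, h ▸ hθ x⟩⟩

lemma isPB_ofInvol (θ : PBV n → PBV n) : IsPB (ofInvol θ) := by
  rintro x y z (rfl | ⟨h₁, -⟩) (rfl | ⟨h₂, -⟩)
  exacts [Or.inl rfl, Or.inl rfl, Or.inr (Or.inl rfl), Or.inr (Or.inr (h₁ ▸ h₂))]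

lemma exists_involutive_eq_ofInvol {α : Dgm n} (hα : IsPB α) :
    ∃ θ : PBV n → PBV n, Involutive θ ∧ α = ofInvol θ := by
  let θ : PBV n → PBV n := fun x => if h : ∃ y, y ≠ x ∧ α.r x y then h.choose else x
  have hθ : ∀ x y, y ≠ x → α.r x y → θ x = y := by
    intro x y hyx hxy
    have h : ∃ y, y ≠ x ∧ α.r x y := ⟨y, hyx, hxy⟩
    obtain ⟨hne, hr⟩ := h.choose_spec
    simp only [θ, dif_pos h]
    rcases hα x _ y hr hxy with h' | h' | h'
    exacts [absurd h'.symm hne, absurd h'.symm hyx, h']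
  have hrel : ∀ x, α.r x (θ x) := by
    intro x
    by_cases h : ∃ y, y ≠ x ∧ α.r x y
    · simpa only [θ, dif_pos h] using h.choose_spec.2
    · simpa only [θ, dif_neg h] using α.iseqv.refl x
  have hinv : Involutive θ := by
    intro x
    by_cases hx : θ x = x
    · rw [hx, hx]
    · exact hθ _ _ (Ne.symm hx) (α.iseqv.symm (hrel x))
  refine ⟨θ, hinv, Setoid.ext fun x y => ?_⟩
  rw [ofInvol_rel_iff hinv]
  refine ⟨fun h => ?_, ?_⟩
  · by_cases hxy : x = y
    exacts [Or.inl hxy, Or.inr (hθ x y (Ne.symm hxy) h)]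
  · rintro (rfl | rfl)
    exacts [α.iseqv.refl x, hrel x]

/-! ### The product graph -/

section ProductGraph

variable {θ φ : PBV n → PBV n}

def onTopMid (θ : PBV n → PBV n) : V3 n → V3 n
  | .inl i => topMid (θ (.inl i))
  | .inr (.inl m) => topMid (θ (.inr m))
  | .inr (.inr j) => .inr (.inr j)

def onMidBot (φ : PBV n → PBV n) : V3 n → V3 n
  | .inl i => .inl i
  | .inr (.inl m) => midBot (φ (.inl m))
  | .inr (.inr j) => midBot (φ (.inr j))

@[simp] lemma onTopMid_inl (θ : PBV n → PBV n) (i : Fin n) :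
    onTopMid θ (.inl i) = topMid (θ (.inl i)) := rfl
@[simp] lemma onTopMid_mid (θ : PBV n → PBV n) (m : Fin n) :
    onTopMid θ (.inr (.inl m)) = topMid (θ (.inr m)) := rfl
@[simp] lemma onTopMid_bot (θ : PBV n → PBV n) (j : Fin n) :
    onTopMid θ (.inr (.inr j)) = .inr (.inr j) := rfl
@[simp] lemma onMidBot_top (φ : PBV n → PBV n) (i : Fin n) :
    onMidBot φ (.inl i) = .inl i := rfl
@[simp] lemma onMidBot_mid (φ : PBV n → PBV n) (m : Fin n) :
    onMidBot φ (.inr (.inl m)) = midBot (φ (.inl m)) := rfl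
@[simp] lemma onMidBot_bot (φ : PBV n → PBV n) (j : Fin n) :
    onMidBot φ (.inr (.inr j)) = midBot (φ (.inr j)) := rfl

@[simp] lemma onTopMid_topMid (θ : PBV n → PBV n) (a : PBV n) :
    onTopMid θ (topMid a) = topMid (θ a) := by cases a <;> rfl
@[simp] lemma onMidBot_midBot (φ : PBV n → PBV n) (a : PBV n) :
    onMidBot φ (midBot a) = midBot (φ a) := by cases a <;> rfl

lemma involutive_onTopMid (hθ : Involutive θ) : Involutive (onTopMid θ) := by
  rintro (i | m | j) <;> simp [hθ _]

lemma involutive_onMidBot (hφ : Involutive φ) : Involutive (onMidBot φ) := by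
  rintro (i | m | j) <;> simp [hφ _]

abbrev Joined (θ φ : PBV n → PBV n) : V3 n → V3 n → Prop :=
  RGen (prodEdges (ofInvol θ) (ofInvol φ))

lemma joined_up (hθ : Involutive θ) {a b : PBV n} (h : θ a = b) :
    Joined θ φ (topMid a) (topMid b) :=
  RGen.rel (Or.inl ⟨a, b, (ofInvol_rel_iff hθ).2 (Or.inr h), rfl, rfl⟩)

lemma joined_down (hφ : Involutive φ) {a b : PBV n} (h : φ a = b) :
    Joined θ φ (midBot a) (midBot b) :=
  RGen.rel (Or.inr ⟨a, b, (ofInvol_rel_iff hφ).2 (Or.inr h), rfl, rfl⟩)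

section Steps

variable {i j k m : Fin n}

lemma joined_top_top (hθ : Involutive θ) (h : θ (.inl i) = .inl k) :
    Joined θ φ (.inl i) (.inl k) := joined_up hθ h

lemma joined_top_mid (hθ : Involutive θ) (h : θ (.inl i) = .inr m) :
    Joined θ φ (.inl i) (.inr (.inl m)) := joined_up hθ h

lemma joined_mid_top (hθ : Involutive θ) (h : θ (.inr m) = .inl k) :
    Joined θ φ (.inr (.inl m)) (.inl k) := joined_up hθ h

lemma joined_mid_mid_up (hθ : Involutive θ) (h : θ (.inr m) = .inr k) :
    Joined θ φ (.inr (.inl m)) (.inr (.inl k)) := joined_up hθ h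

lemma joined_mid_mid_down (hφ : Involutive φ) (h : φ (.inl m) = .inl k) :
    Joined θ φ (.inr (.inl m)) (.inr (.inl k)) := joined_down hφ h

lemma joined_mid_bot (hφ : Involutive φ) (h : φ (.inl m) = .inr j) :
    Joined θ φ (.inr (.inl m)) (.inr (.inr j)) := joined_down hφ h

lemma joined_bot_bot (hφ : Involutive φ) (h : φ (.inr j) = .inr k) :
    Joined θ φ (.inr (.inr j)) (.inr (.inr k)) := joined_down hφ h

end Steps

lemma joined_mem_iff (hθ : Involutive θ) (hφ : Involutive φ) {S : Set (V3 n)}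
    (hU : ∀ u ∈ S, onTopMid θ u ∈ S) (hD : ∀ u ∈ S, onMidBot φ u ∈ S) {u v : V3 n}
    (h : Joined θ φ u v) : u ∈ S ↔ v ∈ S := by
  refine RGen.mem_iff (fun u v huv => ?_) h
  rcases huv with ⟨a, b, hab, rfl, rfl⟩ | ⟨a, b, hab, rfl, rfl⟩
  · rcases (ofInvol_rel_iff hθ).1 hab with rfl | rfl
    · exact Iff.rfl
    · exact ⟨fun h => by simpa using hU _ h, fun h => by simpa [hθ a] using hU _ h⟩
  · rcases (ofInvol_rel_iff hφ).1 hab with rfl | rfl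
    · exact Iff.rfl
    · exact ⟨fun h => by simpa using hD _ h, fun h => by simpa [hφ a] using hD _ h⟩

lemma mem_range_zigzag_of_joined (hθ : Involutive θ) (hφ : Involutive φ)
    {s t : V3 n → V3 n} (hst : s = onTopMid θ ∧ t = onMidBot φ ∨ s = onMidBot φ ∧ t = onTopMid θ)
    {p q : V3 n} (htp : t p = p) (h : Joined θ φ p q) : q ∈ Set.range (zigzag s t p) := by
  refine (joined_mem_iff hθ hφ ?_ ?_ h).1 ⟨0, rfl⟩ <;>
    rcases hst with ⟨rfl, rfl⟩ | ⟨rfl, rfl⟩ <;> rintro _ ⟨k, rfl⟩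
  exacts [apply_zigzag_mem_range_left (involutive_onTopMid hθ) k,
    apply_zigzag_mem_range_right (involutive_onTopMid hθ) htp k,
    apply_zigzag_mem_range_right (involutive_onMidBot hφ) htp k,
    apply_zigzag_mem_range_left (involutive_onMidBot hφ) k]

/-- The component of a boundary vertex is the path traced by `zigzag`. -/
lemma eq_of_joined_of_joined (hθ : Involutive θ) (hφ : Involutive φ) {x y z : PBV n}
    (hy : Joined θ φ (topBot x) (topBot y)) (hz : Joined θ φ (topBot x) (topBot z))
    (hyx : y ≠ x) (hzx : z ≠ x) : y = z := by
  have hfix : ∀ w : PBV n,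
      onTopMid θ (topBot w) = topBot w ∨ onMidBot φ (topBot w) = topBot w := by
    rintro (w | w) <;> simp
  refine topBot_injective ?_
  cases x with
  | inl i =>
    exact eq_of_mem_range_zigzag (involutive_onTopMid hθ) (involutive_onMidBot hφ) rfl
      (mem_range_zigzag_of_joined hθ hφ (Or.inl ⟨rfl, rfl⟩) rfl hy)
      (mem_range_zigzag_of_joined hθ hφ (Or.inl ⟨rfl, rfl⟩) rfl hz)
      (hfix y) (hfix z) (topBot_injective.ne hyx) (topBot_injective.ne hzx)
  | inr j =>
    exact eq_of_mem_range_zigzag (involutive_onMidBot hφ) (involutive_onTopMid hθ) rfl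
      (mem_range_zigzag_of_joined hθ hφ (Or.inr ⟨rfl, rfl⟩) rfl hy)
      (mem_range_zigzag_of_joined hθ hφ (Or.inr ⟨rfl, rfl⟩) rfl hz)
      (hfix y).symm (hfix z).symm (topBot_injective.ne hyx) (topBot_injective.ne hzx)

lemma isPB_pmul {α β : Dgm n} (hα : IsPB α) (hβ : IsPB β) : IsPB (pmul α β) := by
  obtain ⟨θ, hθ, rfl⟩ := exists_involutive_eq_ofInvol hα
  obtain ⟨φ, hφ, rfl⟩ := exists_involutive_eq_ofInvol hβ
  intro x y z hy hz
  by_cases hyx : x = y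
  · exact Or.inl hyx
  by_cases hzx : x = z
  · exact Or.inr (Or.inl hzx)
  exact Or.inr (Or.inr (eq_of_joined_of_joined hθ hφ hy hz (Ne.symm hyx) (Ne.symm hzx)))

lemma domSet_pmul_subset {α β : Dgm n} (hα : IsPB α) (hβ : IsPB β) :
    domSet (pmul α β) ⊆ domSet α := by
  obtain ⟨θ, hθ, rfl⟩ := exists_involutive_eq_ofInvol hα
  obtain ⟨φ, hφ, rfl⟩ := exists_involutive_eq_ofInvol hβ
  rintro i ⟨j, hj⟩
  rcases hi : θ (.inl i) with k | m
  · -- a top hook (or singleton) of the first factor is a whole component of the product graph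
    have hS := joined_mem_iff hθ hφ (S := {.inl i, .inl k}) ?_ ?_ hj
    · simpa using hS.1 (Or.inl rfl)
    · have hk : θ (.inl k) = .inl i := by rw [← hi, hθ]
      rintro _ (rfl | rfl) <;> simp [hi, hk]
    · rintro _ (rfl | rfl) <;> simp
  · exact ⟨m, (ofInvol_rel_iff hθ).2 (Or.inr hi)⟩

lemma pmul_mem_IPB {r : ℕ} {α β : Dgm n} (hα : α ∈ IPB n r) (hβ : β ∈ IPB n r) :
    pmul α β ∈ IPB n r :=
  ⟨isPB_pmul hα.1 hβ.1,
    (Set.ncard_le_ncard (domSet_pmul_subset hα.1 hβ.1) (Set.toFinite _)).trans hα.2⟩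

lemma genSet_subset_IPB {r : ℕ} {X : Set (Dgm n)} (hX : X ⊆ IPB n r) :
    genSet (pmul (n := n)) X ⊆ IPB n r := by
  intro x hx
  induction hx with
  | base h => exact hX h
  | mul _ _ ih₁ ih₂ => exact pmul_mem_IPB ih₁ ih₂

def IsolatedIn (θ φ : PBV n → PBV n) (x : PBV n) : Prop :=
  ∀ y, Joined θ φ (topBot x) (topBot y) → y = x

lemma isolatedIn_of_closed (hθ : Involutive θ) (hφ : Involutive φ) {x : PBV n} {S : Set (V3 n)}
    (hU : ∀ u ∈ S, onTopMid θ u ∈ S) (hD : ∀ u ∈ S, onMidBot φ u ∈ S) (hx : topBot x ∈ S)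
    (hS : ∀ y, topBot y ∈ S → y = x) : IsolatedIn θ φ x :=
  fun y h => hS y ((joined_mem_iff hθ hφ hU hD h).1 hx)

lemma isolatedIn_inl (hθ : Involutive θ) (hφ : Involutive φ) {i : Fin n}
    (h : θ (.inl i) = .inl i) : IsolatedIn θ φ (.inl i) := by
  refine isolatedIn_of_closed hθ hφ (S := {.inl i}) ?_ ?_ rfl ?_ <;>
    simp [h]

lemma isolatedIn_inl_of_mid (hθ : Involutive θ) (hφ : Involutive φ) {i m : Fin n}
    (h₁ : θ (.inl i) = .inr m) (h₂ : φ (.inl m) = .inl m) :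
    IsolatedIn θ φ (.inl i) := by
  have h₃ : θ (.inr m) = .inl i := by rw [← h₁, hθ]
  refine isolatedIn_of_closed hθ hφ (S := {.inl i, .inr (.inl m)}) ?_ ?_
    (Or.inl rfl) ?_
  · rintro _ (rfl | rfl) <;> simp [h₁, h₃]
  · rintro _ (rfl | rfl) <;> simp [h₂]
  · rintro (y | y) <;> simp

lemma isolatedIn_inr (hθ : Involutive θ) (hφ : Involutive φ) {j : Fin n}
    (h : φ (.inr j) = .inr j) : IsolatedIn θ φ (.inr j) := by
  refine isolatedIn_of_closed hθ hφ (S := {.inr (.inr j)}) ?_ ?_ rfl ?_ <;>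
    simp [h]

lemma isolatedIn_inr_of_mid (hθ : Involutive θ) (hφ : Involutive φ) {j m : Fin n}
    (h₁ : φ (.inr j) = .inl m) (h₂ : θ (.inr m) = .inr m) :
    IsolatedIn θ φ (.inr j) := by
  have h₃ : φ (.inl m) = .inr j := by rw [← h₁, hφ]
  refine isolatedIn_of_closed hθ hφ (S := {.inr (.inr j), .inr (.inl m)}) ?_ ?_
    (Or.inl rfl) ?_
  · rintro _ (rfl | rfl) <;> simp [h₂]
  · rintro _ (rfl | rfl) <;> simp [h₁, h₃]
  · rintro (y | y) <;> simp

/-- Paths for the transversals of `ψ` read from below are the reversed paths from above, and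
`eq_of_joined_of_joined` rules out any further partner. -/
lemma pmul_ofInvol_eq {ψ : PBV n → PBV n} (hθ : Involutive θ) (hφ : Involutive φ)
    (hψ : Involutive ψ)
    (hup : ∀ i, ψ (.inl i) ≠ .inl i → Joined θ φ (.inl i) (topBot (ψ (.inl i))))
    (hdown : ∀ j k, ψ (.inr j) = .inr k → k ≠ j → Joined θ φ (.inr (.inr j)) (.inr (.inr k)))
    (hiso : ∀ x, ψ x = x → IsolatedIn θ φ x) :
    pmul (ofInvol θ) (ofInvol φ) = ofInvol ψ := by
  have hpath : ∀ x, ψ x ≠ x → Joined θ φ (topBot x) (topBot (ψ x)) := by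
    rintro (i | j) hx
    · exact hup i hx
    · rcases h : ψ (.inr j) with i | k
      · have hi : ψ (.inl i) = .inr j := by rw [← h, hψ]
        simpa [hi] using (hup i (by simp [hi])).symm
      · exact hdown j k h (by rintro rfl; exact hx h)
  refine Setoid.ext fun x y => ?_
  change Joined θ φ (topBot x) (topBot y) ↔ (ofInvol ψ).r x y
  rw [ofInvol_rel_iff hψ]
  constructor
  · intro h
    by_cases hxy : x = y
    · exact Or.inl hxy
    by_cases hx : ψ x = x
    · exact absurd (hiso x hx y h).symm hxy
    · exact Or.inr (eq_of_joined_of_joined hθ hφ (hpath x hx) h hx (Ne.symm hxy))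
  · rintro (rfl | rfl)
    · exact RGen.refl _
    · by_cases hx : ψ x = x
      · rw [hx]; exact RGen.refl _
      · exact hpath x hx

end ProductGraph

/-! ### Standard form -/

section StandardForm

/-- The involution with upper blocks `{i, μt i}`, lower blocks `{j', (μb j)'}` and transversal
blocks `{i, (σ i)'}` for `i ∈ A`. -/
def stdInvol (μt μb : Fin n → Fin n) (σ : Perm (Fin n)) (A : Set (Fin n)) : PBV n → PBV n
  | .inl i => if i ∈ A then .inr (σ i) else .inl (μt i)
  | .inr j => if σ.symm j ∈ A then .inl (σ.symm j) else .inr (μb j)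

@[simp] lemma stdInvol_inl (μt μb : Fin n → Fin n) (σ : Perm (Fin n)) (A : Set (Fin n))
    (i : Fin n) :
    stdInvol μt μb σ A (.inl i) = if i ∈ A then .inr (σ i) else .inl (μt i) := rfl

@[simp] lemma stdInvol_inr (μt μb : Fin n → Fin n) (σ : Perm (Fin n)) (A : Set (Fin n))
    (j : Fin n) : stdInvol μt μb σ A (.inr j) =
      if σ.symm j ∈ A then .inl (σ.symm j) else .inr (μb j) := rfl

structure IsStd (μt μb : Fin n → Fin n) (σ : Perm (Fin n)) (A : Set (Fin n)) : Prop where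
  involutive_top : Involutive μt
  involutive_bot : Involutive μb
  top_eq : ∀ i ∈ A, μt i = i
  bot_eq : ∀ i ∈ A, μb (σ i) = σ i

def stdDgm (μt μb : Fin n → Fin n) (σ : Perm (Fin n)) (A : Set (Fin n)) : Dgm n :=
  ofInvol (stdInvol μt μb σ A)

abbrev proj (ν : Fin n → Fin n) (C : Set (Fin n)) : Dgm n := stdDgm ν ν (Equiv.refl _) C

abbrev partPerm (σ : Perm (Fin n)) (A : Set (Fin n)) : Dgm n := stdDgm id id σ A

variable {μt μb ν : Fin n → Fin n} {σ : Perm (Fin n)} {A C : Set (Fin n)}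

lemma IsStd.involutive (h : IsStd μt μb σ A) : Involutive (stdInvol μt μb σ A) := by
  rintro (i | j)
  · by_cases hi : i ∈ A
    · simp [hi]
    · have hμ : μt i ∉ A := fun hμ => by
        have e := h.top_eq _ hμ
        rw [h.involutive_top] at e
        exact hi (by rwa [e])
      simp [hi, hμ, h.involutive_top i]
  · by_cases hj : σ.symm j ∈ A
    · simp [hj]
    · have hμ : σ.symm (μb j) ∉ A := fun hμ => by
        have e := h.bot_eq _ hμ
        rw [apply_symm_apply, h.involutive_bot] at e
        exact hj (by rwa [e])
      simp [hj, hμ, h.involutive_bot j]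

lemma IsStd.bot_eq_of_mem_image (h : IsStd μt μb σ A) : ∀ j ∈ σ '' A, μb j = j := by
  rintro _ ⟨i, hi, rfl⟩
  exact h.bot_eq i hi

lemma isStd_proj (hν : Involutive ν) (hC : ∀ i ∈ C, ν i = i) :
    IsStd ν ν (Equiv.refl _) C :=
  ⟨hν, hν, hC, hC⟩

lemma isStd_partPerm (σ : Perm (Fin n)) (A : Set (Fin n)) : IsStd id id σ A :=
  ⟨fun _ => rfl, fun _ => rfl, fun _ _ => rfl, fun _ _ => rfl⟩

lemma stdDgm_mem_PBset (μt μb : Fin n → Fin n) (σ : Perm (Fin n)) (A : Set (Fin n)) :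
    stdDgm μt μb σ A ∈ PBset n :=
  isPB_ofInvol _

lemma prank_stdDgm (h : IsStd μt μb σ A) : prank (stdDgm μt μb σ A) = A.ncard := by
  have : domSet (stdDgm μt μb σ A) = A := by
    ext i
    change (∃ j, (ofInvol _).r _ _) ↔ _
    simp only [ofInvol_rel_iff h.involutive, stdInvol_inl]
    by_cases hi : i ∈ A <;> simp [hi]
  rw [prank, this]

lemma stdDgm_congr {ψ : Perm (Fin n)} (hσψ : ∀ i ∈ A, σ i = ψ i) :
    stdDgm μt μb σ A = stdDgm μt μb ψ A := by
  have key : ∀ {σ ψ : Perm (Fin n)}, (∀ i ∈ A, σ i = ψ i) →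
      ∀ j, σ.symm j ∈ A → ψ.symm j = σ.symm j := by
    intro σ ψ hσψ j hj
    rw [ψ.symm_apply_eq, ← hσψ _ hj, apply_symm_apply]
  refine congrArg ofInvol (funext ?_)
  rintro (i | j)
  · by_cases hi : i ∈ A <;> simp [hi, hσψ]
  · by_cases hj : σ.symm j ∈ A
    · simp [hj, key hσψ j hj]
    · have hj' : ψ.symm j ∉ A := fun hj' =>
        hj (key (fun i hi => (hσψ i hi).symm) j hj' ▸ hj')
      simp [hj, hj']

section OfInvolution

variable {θ : PBV n → PBV n}

def topMatch (θ : PBV n → PBV n) (i : Fin n) : Fin n := (θ (.inl i)).elim id fun _ => i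

def botMatch (θ : PBV n → PBV n) (j : Fin n) : Fin n := (θ (.inr j)).elim (fun _ => j) id

lemma involutive_topMatch (hθ : Involutive θ) : Involutive (topMatch θ) := by
  intro i
  rcases h : θ (.inl i) with k | m
  · simp [topMatch, h, show θ (.inl k) = .inl i by rw [← h, hθ]]
  · simp [topMatch, h]

lemma involutive_botMatch (hθ : Involutive θ) : Involutive (botMatch θ) := by
  intro j
  rcases h : θ (.inr j) with m | k
  · simp [botMatch, h]
  · simp [botMatch, h, show θ (.inr k) = .inr j by rw [← h, hθ]]

lemma exists_perm_of_involutive (hθ : Involutive θ) :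
    ∃ σ : Perm (Fin n), ∀ i j, θ (.inl i) = .inr j → σ i = j := by
  let g : Fin n → Fin n := fun i => (θ (.inl i)).elim (fun _ => i) id
  have hg : ∀ i j, θ (.inl i) = .inr j → g i = j := fun i j h => by simp [g, h]
  have hinj : Set.InjOn g {i | ∃ j, θ (.inl i) = .inr j} := by
    rintro i ⟨j, hj⟩ i' ⟨j', hj'⟩ he
    rw [hg i j hj, hg i' j' hj'] at he
    subst he
    exact Sum.inl_injective (hθ.injective (hj.trans hj'.symm))
  exact ⟨(hinj.bijOn_image.equiv g).extendSubtype, fun i j h =>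
    (extendSubtype_apply_of_mem _ i ⟨j, h⟩).trans (hg i j h)⟩

lemma eq_stdInvol (hθ : Involutive θ) (hσ : ∀ i j, θ (.inl i) = .inr j → σ i = j) :
    θ = stdInvol (topMatch θ) (botMatch θ) σ {i | ∃ j, θ (.inl i) = .inr j} := by
  funext x
  rcases x with i | j
  · rcases h : θ (.inl i) with k | m
    · simp [topMatch, h]
    · simp [h, hσ i m h]
  · rcases h : θ (.inr j) with m | k
    · have hm : θ (.inl m) = .inr j := by rw [← h, hθ]
      simp [σ.symm_apply_eq.2 (hσ m j hm).symm, hm]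
    · have hj : ¬∃ j', θ (.inl (σ.symm j)) = .inr j' := by
        rintro ⟨j', hj'⟩
        have hj'' := hσ _ _ hj'
        rw [apply_symm_apply] at hj''
        subst hj''
        simp [← hj', hθ _] at h
      simp [botMatch, h, hj]

lemma isStd_of_involutive (hθ : Involutive θ) (hσ : ∀ i j, θ (.inl i) = .inr j → σ i = j) :
    IsStd (topMatch θ) (botMatch θ) σ {i | ∃ j, θ (.inl i) = .inr j} := by
  refine ⟨involutive_topMatch hθ, involutive_botMatch hθ, ?_, ?_⟩ <;> rintro i ⟨j, hj⟩
  · simp [topMatch, hj]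
  · simp [botMatch, hσ i j hj, show θ (.inr j) = .inl i by rw [← hj, hθ]]

end OfInvolution

lemma exists_isStd_eq_stdDgm {α : Dgm n} (hα : IsPB α) :
    ∃ μt μb σ A, IsStd μt μb σ A ∧ α = stdDgm μt μb σ A := by
  obtain ⟨θ, hθ, rfl⟩ := exists_involutive_eq_ofInvol hα
  obtain ⟨σ, hσ⟩ := exists_perm_of_involutive hθ
  exact ⟨_, _, σ, _, isStd_of_involutive hθ hσ, by rw [stdDgm, ← eq_stdInvol hθ hσ]⟩

end StandardForm

/-! ### Products of standard diagrams -/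

section Products

variable {μt μb ν : Fin n → Fin n} {σ : Perm (Fin n)} {A : Set (Fin n)}

lemma proj_mul_stdDgm (hν : Involutive ν) (hνA : ∀ i ∈ A, ν i = i) (h : IsStd μt μb σ A) :
    pmul (proj ν A) (stdDgm μt μb σ A) = stdDgm ν μb σ A := by
  have h₁ := (isStd_proj hν hνA).involutive
  have h₂ := h.involutive
  refine pmul_ofInvol_eq h₁ h₂ (IsStd.involutive ⟨hν, h.involutive_bot, hνA, h.bot_eq⟩)
    (fun i _ => ?_) (fun j k hjk _ => ?_) ?_
  · by_cases hiA : i ∈ A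
    · simp only [stdInvol_inl, if_pos hiA]
      exact (joined_top_mid (m := i) h₁ (by simp [hiA])).trans (joined_mid_bot h₂ (by simp [hiA]))
    · simp only [stdInvol_inl, if_neg hiA]
      exact joined_top_top h₁ (by simp [hiA])
  · simp only [stdInvol_inr] at hjk
    split_ifs at hjk with hj
    cases hjk
    exact joined_bot_bot h₂ (by simp [hj])
  · rintro (i | j) hx
    · by_cases hiA : i ∈ A
      · simp [hiA] at hx
      · exact isolatedIn_inl h₁ h₂ (by simpa [hiA] using hx)
    · by_cases hj : σ.symm j ∈ A
      · simp [hj] at hx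
      · exact isolatedIn_inr h₁ h₂ (by simpa [hj] using hx)

lemma stdDgm_mul_proj (hν : Involutive ν) (hνA : ∀ i ∈ A, ν (σ i) = σ i)
    (h : IsStd μt μb σ A) : pmul (stdDgm μt μb σ A) (proj ν (σ '' A)) = stdDgm μt ν σ A := by
  have h₁ := h.involutive
  have h₂ := (isStd_proj hν (C := σ '' A) (by rintro _ ⟨i, hi, rfl⟩; exact hνA i hi)).involutive
  refine pmul_ofInvol_eq h₁ h₂ (IsStd.involutive ⟨h.involutive_top, hν, h.top_eq, hνA⟩)
    (fun i _ => ?_) (fun j k hjk _ => ?_) ?_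
  · by_cases hiA : i ∈ A
    · simp only [stdInvol_inl, if_pos hiA]
      exact (joined_top_mid (m := σ i) h₁ (by simp [hiA])).trans
        (joined_mid_bot h₂ (by simp [hiA]))
    · simp only [stdInvol_inl, if_neg hiA]
      exact joined_top_top h₁ (by simp [hiA])
  · simp only [stdInvol_inr] at hjk
    split_ifs at hjk with hj
    cases hjk
    exact joined_bot_bot h₂ (by simp [hj])
  · rintro (i | j) hx
    · by_cases hiA : i ∈ A
      · simp [hiA] at hx
      · exact isolatedIn_inl h₁ h₂ (by simpa [hiA] using hx)
    · by_cases hj : σ.symm j ∈ A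
      · simp [hj] at hx
      · exact isolatedIn_inr h₁ h₂ (by simpa [hj] using hx)

lemma partPerm_mul_partPerm (σ τ : Perm (Fin n)) (A : Set (Fin n)) :
    pmul (partPerm σ A) (partPerm τ (σ '' A)) = partPerm (σ.trans τ) A := by
  have h₁ := (isStd_partPerm σ A).involutive
  have h₂ := (isStd_partPerm τ (σ '' A)).involutive
  refine pmul_ofInvol_eq h₁ h₂ (isStd_partPerm _ A).involutive
    (fun i hi => ?_) (fun j k hjk hkj => ?_) ?_
  · by_cases hiA : i ∈ A
    · simp only [stdInvol_inl, if_pos hiA]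
      exact (joined_top_mid (m := σ i) h₁ (by simp [hiA])).trans (joined_mid_bot h₂ (by simp [hiA]))
    · simp [hiA] at hi
  · simp only [stdInvol_inr] at hjk
    split_ifs at hjk with hj
    exact absurd (Sum.inr_injective hjk) (Ne.symm hkj)
  · rintro (i | j) hx
    · by_cases hiA : i ∈ A
      · simp [hiA] at hx
      · exact isolatedIn_inl h₁ h₂ (by simp [hiA])
    · by_cases hj : (σ.trans τ).symm j ∈ A
      · simp_all
      · exact isolatedIn_inr h₁ h₂ (by simp_all)

lemma involutive_piecewise {S : Set (Fin n)} (hν : Involutive ν) (hS : ∀ x, ν x ∈ S ↔ x ∈ S) :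
    Involutive (S.piecewise id ν) := by
  intro x
  by_cases hx : x ∈ S
  · simp [hx]
  · simp [hx, (hS x).not.2 hx, hν x]

lemma piecewise_id_apply_of_mem_union {C S : Set (Fin n)} (hC : ∀ i ∈ C, ν i = i) {i : Fin n}
    (hi : i ∈ S ∪ C) : S.piecewise id ν i = i := by
  by_cases hiS : i ∈ S
  · simp [hiS]
  · simp [hiS, hC i (hi.resolve_left hiS)]

lemma pmul_proj_piecewise {C S₁ S₂ : Set (Fin n)} (hν : Involutive ν) (hC : ∀ i ∈ C, ν i = i)
    (hS₁ : ∀ x, ν x ∈ S₁ ↔ x ∈ S₁) (hS₂ : ∀ x, ν x ∈ S₂ ↔ x ∈ S₂) (hS : Disjoint S₁ S₂) :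
    pmul (proj (S₁.piecewise id ν) (S₁ ∪ C)) (proj (S₂.piecewise id ν) (S₂ ∪ C)) = proj ν C := by
  have h₁ := (isStd_proj (involutive_piecewise hν hS₁)
    fun _ => piecewise_id_apply_of_mem_union hC).involutive
  have h₂ := (isStd_proj (involutive_piecewise hν hS₂)
    fun _ => piecewise_id_apply_of_mem_union hC).involutive
  refine pmul_ofInvol_eq h₁ h₂ (isStd_proj hν hC).involutive
    (fun i _ => ?_) (fun j k hjk _ => ?_) ?_
  · by_cases hiC : i ∈ C
    · simp only [stdInvol_inl, if_pos hiC, refl_apply]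
      exact (joined_top_mid (m := i) h₁ (by simp [hiC])).trans
        (joined_mid_bot h₂ (by simp [hiC]))
    simp only [stdInvol_inl, if_neg hiC]
    by_cases hi₁ : i ∈ S₁
    · have hi₂ : i ∉ S₂ ∪ C := fun h => h.elim (Set.disjoint_left.1 hS hi₁) hiC
      exact ((joined_top_mid (m := i) h₁ (by simp [hi₁])).trans
        (joined_mid_mid_down (k := ν i) h₂ (by simp [hi₂, Set.disjoint_left.1 hS hi₁]))).trans
        (joined_mid_top h₁ (by simp [(hS₁ i).2 hi₁]))
    · exact joined_top_top h₁ (by simp [hi₁, hiC])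
  · have hjC : j ∉ C := fun h => by simp [h] at hjk
    obtain rfl : ν j = k := by simpa [hjC] using hjk
    by_cases hj₂ : j ∈ S₂
    · have hj₁ : j ∉ S₁ ∪ C := fun h => h.elim (Set.disjoint_right.1 hS hj₂) hjC
      exact ((joined_mid_bot (m := j) h₂ (by simp [hj₂])).symm.trans
        (joined_mid_mid_up (k := ν j) h₁ (by simp [hj₁, Set.disjoint_right.1 hS hj₂]))).trans
        (joined_mid_bot h₂ (by simp [(hS₂ j).2 hj₂]))
    · exact joined_bot_bot h₂ (by simp [hj₂, hjC])
  · rintro (i | j) hx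
    · by_cases hiC : i ∈ C
      · simp [hiC] at hx
      have hνi : ν i = i := by simpa [hiC] using hx
      by_cases hi₁ : i ∈ S₁
      · exact isolatedIn_inl_of_mid (m := i) h₁ h₂ (by simp [hi₁])
          (by simp [Set.disjoint_left.1 hS hi₁, hiC, hνi])
      · exact isolatedIn_inl h₁ h₂ (by simp [hi₁, hiC, hνi])
    · by_cases hjC : j ∈ C
      · simp [hjC] at hx
      have hνj : ν j = j := by simpa [hjC] using hx
      by_cases hj₂ : j ∈ S₂
      · exact isolatedIn_inr_of_mid (m := j) h₁ h₂ (by simp [hj₂])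
          (by simp [Set.disjoint_right.1 hS hj₂, hjC, hνj])
      · exact isolatedIn_inr h₁ h₂ (by simp [hj₂, hjC, hνj])

lemma involutive_swap (a b : Fin n) : Involutive (swap a b) := swap_apply_self a b

lemma swap_apply_eq_self_of_mem {a b i : Fin n} (ha : a ∉ A) (hb : b ∉ A)
    (hi : i ∈ A) : swap a b i = i :=
  swap_apply_of_ne_of_ne (ne_of_mem_of_not_mem hi ha) (ne_of_mem_of_not_mem hi hb)

lemma isStd_swap {a b c : Fin n} (ha : a ∈ A) (hb : b ∉ A) (hc : c ∉ A)
    (hbc : b ≠ c) : IsStd (swap b c) (swap c a) (swap a b) A := by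
  refine ⟨involutive_swap b c, involutive_swap c a, fun i hi => swap_apply_eq_self_of_mem hb hc hi,
    fun i hi => ?_⟩
  by_cases hia : i = a
  · rw [hia, swap_apply_left, swap_apply_of_ne_of_ne hbc (ne_of_mem_of_not_mem ha hb).symm]
  · rw [swap_apply_of_ne_of_ne hia (ne_of_mem_of_not_mem hi hb)]
    exact swap_apply_of_ne_of_ne (ne_of_mem_of_not_mem hi hc) hia

/-- The hook `{b, c}` of the first factor and the hook `{c, a}` of the second one route the
transversal through `a` to `b'`. -/
lemma proj_swap_mul_proj_swap {a b c : Fin n} (ha : a ∈ A) (hb : b ∉ A)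
    (hc : c ∉ A) (hbc : b ≠ c) :
    pmul (proj (swap b c) A) (proj (swap c a) (swap a b '' A)) =
      stdDgm (swap b c) (swap c a) (swap a b) A := by
  have hstd := isStd_swap ha hb hc hbc
  have h₁ := (isStd_proj (involutive_swap b c) hstd.top_eq).involutive
  have h₂ := (isStd_proj (involutive_swap c a) hstd.bot_eq_of_mem_image).involutive
  refine pmul_ofInvol_eq h₁ h₂ hstd.involutive (fun i _ => ?_) (fun j k hjk _ => ?_) ?_
  · by_cases hiA : i ∈ A
    · simp only [stdInvol_inl, if_pos hiA]
      by_cases hia : i = a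
      · subst hia
        rw [swap_apply_left]
        exact (((joined_top_mid (m := i) h₁ (by simp [hiA])).trans
          (joined_mid_mid_down (k := c) h₂ (by simp [hb]))).trans
          (joined_mid_mid_up (k := b) h₁ (by simp [hc]))).trans
          (joined_mid_bot h₂ (by simp [hiA]))
      · have hi : swap a b i = i := swap_apply_of_ne_of_ne hia (ne_of_mem_of_not_mem hiA hb)
        rw [hi]
        exact (joined_top_mid (m := i) h₁ (by simp [hiA])).trans
          (joined_mid_bot h₂ (by simp [hi, hiA]))
    · simp only [stdInvol_inl, if_neg hiA]
      exact joined_top_top h₁ (by simp [hiA])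
  · simp only [stdInvol_inr] at hjk
    split_ifs at hjk with hj
    cases hjk
    exact joined_bot_bot h₂ (by simp_all)
  · rintro (i | j) hx
    · by_cases hiA : i ∈ A
      · simp [hiA] at hx
      · exact isolatedIn_inl h₁ h₂ (by simp_all)
    · by_cases hj : (swap a b).symm j ∈ A
      · simp_all
      · exact isolatedIn_inr h₁ h₂ (by simp_all)

end Products

/-! ### Generation -/

section Generation

lemma involutive_id : Involutive (id : Fin n → Fin n) := fun _ => rfl

lemma ncard_perm_image (σ : Perm (Fin n)) (A : Set (Fin n)) : (σ '' A).ncard = A.ncard :=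
  Set.ncard_image_of_injective _ σ.injective

lemma exists_notMem_of_ncard_lt {C : Set (Fin n)} (h : C.ncard < n) : ∃ u, u ∉ C :=
  (Set.ne_univ_iff_exists_notMem C).1 fun hC => by simp [hC] at h

lemma stdDgm_eq_proj_mul_partPerm_mul_proj {μt μb : Fin n → Fin n} {σ : Perm (Fin n)}
    {A : Set (Fin n)} (h : IsStd μt μb σ A) :
    stdDgm μt μb σ A = pmul (pmul (proj μt A) (partPerm σ A)) (proj μb (σ '' A)) := by
  rw [proj_mul_stdDgm h.involutive_top h.top_eq (isStd_partPerm σ A),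
    stdDgm_mul_proj h.involutive_bot h.bot_eq ⟨h.involutive_top, fun _ => rfl, h.top_eq,
      fun _ _ => rfl⟩]

variable {ν : Fin n → Fin n} {C : Set (Fin n)}

lemma proj_isIdpt (hν : Involutive ν) (hC : ∀ i ∈ C, ν i = i) : IsIdpt (proj ν C) :=
  proj_mul_stdDgm hν hC (isStd_proj hν hC)

def topIdpts (n r : ℕ) : Set (Dgm n) := {α | α ∈ DPB n r ∪ DPB n (r - 1) ∧ IsIdpt α}

variable {r : ℕ} {A : Set (Fin n)}

lemma proj_mem_topIdpts (hν : Involutive ν) (hC : ∀ i ∈ C, ν i = i)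
    (hcard : C.ncard = r ∨ C.ncard = r - 1) : proj ν C ∈ topIdpts n r :=
  ⟨hcard.imp (fun h => ⟨stdDgm_mem_PBset _ _ _ _, (prank_stdDgm (isStd_proj hν hC)).trans h⟩)
    (fun h => ⟨stdDgm_mem_PBset _ _ _ _, (prank_stdDgm (isStd_proj hν hC)).trans h⟩),
    proj_isIdpt hν hC⟩

/-- Below rank `r - 1` there are free points `u` and `v ∉ {u, ν u}`, and straightening the hook
(or singleton) at `u`, respectively at `v`, raises the rank. -/
lemma proj_mem_genSet (h2 : r + 2 ≤ n) (hν : Involutive ν) (hC : ∀ i ∈ C, ν i = i)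
    (hcard : C.ncard ≤ r) : proj ν C ∈ genSet (pmul (n := n)) (topIdpts n r) := by
  induction hk : r - C.ncard using Nat.strong_induction_on generalizing ν C with
  | _ k ih =>
    by_cases hbig : r ≤ C.ncard + 1
    · exact MClo.base (proj_mem_topIdpts hν hC (by omega))
    have hsmall : ∀ u, ({u, ν u} ∪ C).ncard ≤ C.ncard + 2 := fun u =>
      (Set.ncard_union_le _ _).trans (by have := Set.ncard_insert_le u {ν u}; simp at this; omega)
    obtain ⟨u, hu⟩ := exists_notMem_of_ncard_lt (C := C) (by omega)
    obtain ⟨v, hv⟩ := exists_notMem_of_ncard_lt (C := {u, ν u} ∪ C) (by linarith [hsmall u])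
    have hgrow : ∀ w, w ∉ C → C.ncard < ({w, ν w} ∪ C).ncard := fun w hw =>
      Set.ncard_lt_ncard (Set.ssubset_iff_of_subset Set.subset_union_right |>.2
        ⟨w, Or.inl (Or.inl rfl), hw⟩)
    have hv' : v ∉ C := fun h => hv (Or.inr h)
    rw [← pmul_proj_piecewise hν hC (hν.apply_mem_pair_iff u) (hν.apply_mem_pair_iff v)
      (hν.disjoint_pair fun h => hv (Or.inl h))]
    exact MClo.mul
      (ih _ (by have := hgrow u hu; omega) (involutive_piecewise hν (hν.apply_mem_pair_iff u))
        (fun _ => piecewise_id_apply_of_mem_union hC) (by have := hsmall u; omega) rfl)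
      (ih _ (by have := hgrow v hv'; omega) (involutive_piecewise hν (hν.apply_mem_pair_iff v))
        (fun _ => piecewise_id_apply_of_mem_union hC) (by have := hsmall v; omega) rfl)

lemma proj_id_mem_genSet (h2 : r + 2 ≤ n) (hA : A.ncard ≤ r) :
    proj id A ∈ genSet (pmul (n := n)) (topIdpts n r) :=
  proj_mem_genSet h2 involutive_id (fun _ _ => rfl) hA

lemma partPerm_swap_eq_pmul_proj {a b c : Fin n} (ha : a ∈ A) (hb : b ∉ A)
    (hc : c ∉ A) (hbc : b ≠ c) :
    partPerm (swap a b) A = pmul (pmul (proj id A)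
      (pmul (proj (swap b c) A) (proj (swap c a) (swap a b '' A)))) (proj id (swap a b '' A)) := by
  have hstd := isStd_swap ha hb hc hbc
  rw [proj_swap_mul_proj_swap ha hb hc hbc, proj_mul_stdDgm involutive_id (fun _ _ => rfl) hstd,
    stdDgm_mul_proj involutive_id (fun _ _ => rfl)
      ⟨involutive_id, hstd.involutive_bot, fun _ _ => rfl, hstd.bot_eq⟩]

lemma partPerm_swap_mem_genSet_of_mem (h2 : r + 2 ≤ n) {a b : Fin n} (ha : a ∈ A) (hb : b ∉ A)
    (hA : A.ncard ≤ r) : partPerm (swap a b) A ∈ genSet (pmul (n := n)) (topIdpts n r) := by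
  obtain ⟨c, hc⟩ := exists_notMem_of_ncard_lt (C := insert b A)
    (by have := Set.ncard_insert_le b A; omega)
  have hstd := isStd_swap ha hb (fun h => hc (Or.inr h)) fun h => hc (Or.inl h.symm)
  have hA' := (ncard_perm_image (swap a b) A).trans_le hA
  rw [partPerm_swap_eq_pmul_proj ha hb (fun h => hc (Or.inr h)) fun h => hc (Or.inl h.symm)]
  exact MClo.mul (MClo.mul (proj_id_mem_genSet h2 hA)
    (MClo.mul (proj_mem_genSet h2 hstd.involutive_top hstd.top_eq hA)
      (proj_mem_genSet h2 hstd.involutive_bot hstd.bot_eq_of_mem_image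
        hA')))
    (proj_id_mem_genSet h2 hA')

lemma partPerm_swap_mem_genSet_of_notMem (h2 : r + 2 ≤ n) (a : Fin n) {b : Fin n} (hb : b ∉ A)
    (hA : A.ncard ≤ r) : partPerm (swap a b) A ∈ genSet (pmul (n := n)) (topIdpts n r) := by
  by_cases ha : a ∈ A
  · exact partPerm_swap_mem_genSet_of_mem h2 ha hb hA
  · rw [partPerm, stdDgm_congr (ψ := Equiv.refl _) fun i hi => swap_apply_eq_self_of_mem ha hb hi]
    exact proj_id_mem_genSet h2 hA

/-- A transposition inside `A` is routed through a point `t ∉ A`: first `x ↦ t`, then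
`y ↦ x`, then `t ↦ y`. -/
lemma partPerm_swap_mem_genSet (h2 : r + 2 ≤ n) (hA : A.ncard ≤ r) (x y : Fin n) :
    partPerm (swap x y) A ∈ genSet (pmul (n := n)) (topIdpts n r) := by
  by_cases hy : y ∈ A
  swap
  · exact partPerm_swap_mem_genSet_of_notMem h2 x hy hA
  by_cases hx : x ∈ A
  swap
  · rw [swap_comm]; exact partPerm_swap_mem_genSet_of_notMem h2 y hx hA
  by_cases hxy : x = y
  · rw [hxy, swap_self]
    exact proj_id_mem_genSet h2 hA
  obtain ⟨t, ht⟩ := exists_notMem_of_ncard_lt (C := A) (by omega)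
  have htx : t ≠ x := fun h => ht (h ▸ hx)
  have hty : t ≠ y := fun h => ht (h ▸ hy)
  have hcard : ∀ σ : Perm (Fin n), (σ '' A).ncard ≤ r := fun σ =>
    (ncard_perm_image σ A).trans_le hA
  have e : swap x y = ((swap x t).trans (swap y x)).trans (swap t y) := by
    ext z
    simp only [trans_apply, swap_apply_def]
    split_ifs <;> simp_all
  rw [e, ← partPerm_mul_partPerm, ← partPerm_mul_partPerm]
  refine MClo.mul (MClo.mul (partPerm_swap_mem_genSet_of_notMem h2 x ht hA)
    (partPerm_swap_mem_genSet_of_notMem h2 y ?_ (hcard _)))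
    (partPerm_swap_mem_genSet_of_notMem h2 t ?_ (hcard _))
  · simp [swap_apply_left, ht]
  · simp only [Set.mem_image_equiv, symm_trans_apply, symm_swap, swap_apply_left]
    exact ht

lemma partPerm_mem_genSet (h2 : r + 2 ≤ n) (hA : A.ncard ≤ r) (σ : Perm (Fin n)) :
    partPerm σ A ∈ genSet (pmul (n := n)) (topIdpts n r) := by
  induction σ using Perm.swap_induction_on generalizing A with
  | one => exact proj_id_mem_genSet h2 hA
  | swap_mul σ x y _ ih =>
    rw [Perm.mul_def, ← partPerm_mul_partPerm]
    exact MClo.mul (ih hA) (partPerm_swap_mem_genSet h2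
      ((ncard_perm_image σ A).trans_le hA) x y)

lemma IPB_subset_genSet (h2 : r + 2 ≤ n) : IPB n r ⊆ genSet (pmul (n := n)) (topIdpts n r) := by
  rintro α ⟨hα, hrank⟩
  obtain ⟨μt, μb, σ, A, h, rfl⟩ := exists_isStd_eq_stdDgm hα
  rw [prank_stdDgm h] at hrank
  rw [stdDgm_eq_proj_mul_partPerm_mul_proj h]
  exact MClo.mul (MClo.mul (proj_mem_genSet h2 h.involutive_top h.top_eq hrank)
    (partPerm_mem_genSet h2 hrank σ))
    (proj_mem_genSet h2 h.involutive_bot h.bot_eq_of_mem_image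
      ((ncard_perm_image σ A).trans_le hrank))

end Generation

end Dgm

theorem IPB_generated_by_top_two_general (n r : ℕ) (h2 : r + 2 ≤ n) :
    IPB n r = genSet (pmul (n := n)) (DPB n r ∪ DPB n (r - 1)) ∧
    IPB n r = genSet (pmul (n := n)) {α | α ∈ DPB n r ∪ DPB n (r - 1) ∧ IsIdpt α} := by
  have hD : DPB n r ∪ DPB n (r - 1) ⊆ IPB n r := by
    rintro α (⟨hα, h⟩ | ⟨hα, h⟩) <;> exact ⟨hα, by omega⟩
  have hE : topIdpts n r ⊆ DPB n r ∪ DPB n (r - 1) := fun α hα => hα.1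
  have hI := IPB_subset_genSet h2
  exact ⟨(hI.trans (genSet_mono _ hE)).antisymm (genSet_subset_IPB hD),
    hI.antisymm (genSet_subset_IPB (hE.trans hD))⟩

/-- For `1 ≤ r ≤ n - 2`, the ideal `I_r(PB_n)` is generated
by its top two D-classes, and also by the idempotents therein. -/
theorem IPB_generated_by_top_two (n r : ℕ) (h1 : 1 ≤ r) (h2 : r + 2 ≤ n) :
    IPB n r = genSet (pmul (n := n)) (DPB n r ∪ DPB n (r - 1)) ∧
    IPB n r = genSet (pmul (n := n)) {α | α ∈ DPB n r ∪ DPB n (r - 1) ∧ IsIdpt α} :=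
  IPB_generated_by_top_two_general n r h2
end
end
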